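/- arXiv:2102.10196 — 6 statements merged into one kernel-verified Lean document; each statement's English description precedes it below -/
import Mathlib

section
/- (Lower estimate) For any probability distribution ρ on the spanning trees of G and non-negative weights θ and potentials, L_ρ(θ) := Σ_{T} ρ^T Φ(Π^T(θ)) ≤ Φ(θ), where Π^T(θ) zeroes out the weights of edges not in T. -/
open scoped Classical

/-- The log-partition function of a pairwise graphical model on the graph `G`, with
edge weights `θ` and edge potentials `ψ` (a potential `ψ e` evaluates a configuration
`x : V → X`; pairwise structure is imposed by a locality hypothesis in theorems). -/
noncomputable def logPartitionFn {V X : Type*} [Fintype V] [DecidableEq V] [Fintype X]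
    (G : SimpleGraph V) [DecidableRel G.Adj]
    (ψ : Sym2 V → (V → X) → ℝ) (θ : Sym2 V → ℝ) : ℝ :=
  Real.log (∑ x : V → X, Real.exp (∑ e ∈ G.edgeFinset, θ e * ψ e x))

/- Each tree term is bounded by `Φ(θ)` on its own: with non-negative potentials, `Φ` is monotone in
the weights, and `Π^T(θ) ≤ θ` edgewise because `θ ≥ 0`. Averaging over `ρ` then gives the estimate. -/

theorem logPartitionFn_mono {V X : Type*} [Fintype V] [DecidableEq V] [Fintype X] [Nonempty X]
    (G : SimpleGraph V) [DecidableRel G.Adj]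
    {ψ : Sym2 V → (V → X) → ℝ} (hψ : ∀ e x, 0 ≤ ψ e x)
    {θ θ' : Sym2 V → ℝ} (hle : ∀ e ∈ G.edgeSet, θ e ≤ θ' e) :
    logPartitionFn G ψ θ ≤ logPartitionFn G ψ θ' := by
  refine Real.log_le_log (Finset.sum_pos (fun x _ => Real.exp_pos _) Finset.univ_nonempty) ?_
  refine Finset.sum_le_sum fun x _ => Real.exp_le_exp.mpr (Finset.sum_le_sum fun e he => ?_)
  exact mul_le_mul_of_nonneg_right (hle e (G.mem_edgeFinset.mp he)) (hψ e x)

theorem trw_lower_estimate_general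
    {V X : Type*} [Fintype V] [DecidableEq V] [Fintype X] [Nonempty X]
    (G : SimpleGraph V) [DecidableRel G.Adj]
    (ψ : Sym2 V → (V → X) → ℝ) (hψ : ∀ e x, 0 ≤ ψ e x)
    (θ : Sym2 V → ℝ) (hθ : ∀ e, 0 ≤ θ e)
    {ι : Type*} [Fintype ι] (Tr : ι → SimpleGraph V)
    (ρ : ι → ℝ) (hρ0 : ∀ i, 0 ≤ ρ i) (hρ1 : ∑ i, ρ i = 1) :
    ∑ i, ρ i * logPartitionFn G ψ (fun e => if e ∈ (Tr i).edgeSet then θ e else 0)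
      ≤ logPartitionFn G ψ θ := by
  have tree_term_le : ∀ i,
      logPartitionFn G ψ (fun e => if e ∈ (Tr i).edgeSet then θ e else 0)
        ≤ logPartitionFn G ψ θ := fun i =>
    logPartitionFn_mono G hψ fun e _ => by split_ifs <;> simp [hθ e]
  calc ∑ i, ρ i * logPartitionFn G ψ (fun e => if e ∈ (Tr i).edgeSet then θ e else 0)
      ≤ ∑ i, ρ i * logPartitionFn G ψ θ :=
        Finset.sum_le_sum fun i _ => mul_le_mul_of_nonneg_left (tree_term_le i) (hρ0 i)
    _ = logPartitionFn G ψ θ := by rw [← Finset.sum_mul, hρ1, one_mul]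

/-- Lower estimate: for any probability distribution `ρ` on the spanning trees of `G`
and non-negative weights and potentials,
`L_ρ(θ) = Σ_T ρ^T Φ(Π^T(θ)) ≤ Φ(θ)`, where `Π^T(θ)` zeroes out weights off `T`. -/
theorem trw_lower_estimate
    {V X : Type*} [Fintype V] [DecidableEq V] [Fintype X] [Nonempty X]
    (G : SimpleGraph V) [DecidableRel G.Adj] (hG : G.Connected)
    (ψ : Sym2 V → (V → X) → ℝ) (hψ : ∀ e x, 0 ≤ ψ e x)
    (hpair : ∀ e ∈ G.edgeSet, ∀ x y : V → X, (∀ v ∈ e, x v = y v) → ψ e x = ψ e y)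
    (θ : Sym2 V → ℝ) (hθ : ∀ e, 0 ≤ θ e)
    {ι : Type*} [Fintype ι] (Tr : ι → SimpleGraph V)
    (hsub : ∀ i, Tr i ≤ G) (htree : ∀ i, (Tr i).IsTree)
    (ρ : ι → ℝ) (hρ0 : ∀ i, 0 ≤ ρ i) (hρ1 : ∑ i, ρ i = 1) :
    ∑ i, ρ i * logPartitionFn G ψ (fun e => if e ∈ (Tr i).edgeSet then θ e else 0)
      ≤ logPartitionFn G ψ θ :=
  trw_lower_estimate_general G ψ hψ θ hθ Tr ρ hρ0 hρ1
end

section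
/- (Upper estimate) For any probability distribution ρ on spanning trees of G with edge-appearance probabilities ρ_e = P_{T∼ρ}(e∈T) all strictly positive, U_ρ(θ) := Σ_T ρ^T Φ(Π^T_ρ(θ)) ≥ Φ(θ), where Π^T_ρ(θ)_e = 1(e∈T)·θ_e/ρ_e. -/
/-!
`Φ` is a log-sum-exp of linear functions of `θ`, hence convex (by the finite Hölder inequality),
and on every edge `e` of `G` the `ρ`-average of the tree projections `Π^T_ρ(θ)_e` is
`ρ_e · θ_e / ρ_e = θ_e`. Jensen's inequality for `Φ` is then exactly the claim.
-/

open scoped Classical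

open Finset

/-- Hölder's inequality for finitely many positive functions on a finite type. -/
theorem sum_prod_rpow_le_prod_sum_rpow {ι κ : Type*} [Fintype ι] [Fintype κ] [Nonempty κ]
    (w : ι → ℝ) (hw : ∀ i, 0 ≤ w i) (hw1 : ∑ i, w i = 1)
    (f : ι → κ → ℝ) (hf : ∀ i x, 0 < f i x) :
    ∑ x, ∏ i, f i x ^ w i ≤ ∏ i, (∑ x, f i x) ^ w i := by
  set S : ι → ℝ := fun i => ∑ x, f i x
  have hS : ∀ i, 0 < S i := fun i => sum_pos (fun x _ => hf i x) univ_nonempty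
  -- Normalize each `f i` to total mass one and apply weighted AM-GM pointwise.
  have amgm : ∀ x, ∏ i, f i x ^ w i ≤ (∏ i, S i ^ w i) * ∑ i, w i * (f i x / S i) := by
    intro x
    calc ∏ i, f i x ^ w i = (∏ i, S i ^ w i) * ∏ i, (f i x / S i) ^ w i := by
          rw [← prod_mul_distrib]
          refine prod_congr rfl fun i _ => ?_
          rw [← Real.mul_rpow (hS i).le (div_pos (hf i x) (hS i)).le,
            mul_div_cancel₀ _ (hS i).ne']
      _ ≤ (∏ i, S i ^ w i) * ∑ i, w i * (f i x / S i) := by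
          refine mul_le_mul_of_nonneg_left ?_ (prod_nonneg fun i _ => Real.rpow_nonneg (hS i).le _)
          exact Real.geom_mean_le_arith_mean_weighted _ _ _ (fun i _ => hw i) hw1
            fun i _ => (div_pos (hf i x) (hS i)).le
  have mass : ∑ x, ∑ i, w i * (f i x / S i) = 1 := by
    rw [sum_comm, ← hw1]
    refine sum_congr rfl fun i _ => ?_
    rw [← mul_sum, ← sum_div, div_self (hS i).ne', mul_one]
  calc ∑ x, ∏ i, f i x ^ w i ≤ ∑ x, (∏ i, S i ^ w i) * ∑ i, w i * (f i x / S i) :=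
        sum_le_sum fun x _ => amgm x
    _ = ∏ i, S i ^ w i := by rw [← mul_sum, mass, mul_one]

theorem Real.log_sum_exp_sum_mul_le {ι κ : Type*} [Fintype ι] [Fintype κ]
    (w : ι → ℝ) (hw : ∀ i, 0 ≤ w i) (hw1 : ∑ i, w i = 1) (a : ι → κ → ℝ) :
    Real.log (∑ x, Real.exp (∑ i, w i * a i x))
      ≤ ∑ i, w i * Real.log (∑ x, Real.exp (a i x)) := by
  rcases isEmpty_or_nonempty κ with _ | _
  · simp
  have hpos : ∀ i, 0 < ∑ x, Real.exp (a i x) :=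
    fun i => sum_pos (fun x _ => Real.exp_pos _) univ_nonempty
  have hexp : ∀ x, Real.exp (∑ i, w i * a i x) = ∏ i, Real.exp (a i x) ^ w i := by
    intro x
    rw [Real.exp_sum]
    exact prod_congr rfl fun i _ => by rw [← Real.exp_mul, mul_comm]
  calc Real.log (∑ x, Real.exp (∑ i, w i * a i x))
      ≤ Real.log (∏ i, (∑ x, Real.exp (a i x)) ^ w i) := by
        refine Real.log_le_log (sum_pos (fun x _ => Real.exp_pos _) univ_nonempty) ?_
        simp only [hexp]
        exact sum_prod_rpow_le_prod_sum_rpow w hw hw1 _ fun i x => Real.exp_pos _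
    _ = ∑ i, w i * Real.log (∑ x, Real.exp (a i x)) := by
        rw [Real.log_prod fun i _ => (Real.rpow_pos_of_pos (hpos i) _).ne']
        exact sum_congr rfl fun i _ => Real.log_rpow (hpos i) _

section logPartitionFn

variable {V X : Type*} [Fintype V] [DecidableEq V] [Fintype X]
  (G : SimpleGraph V) [DecidableRel G.Adj] (ψ : Sym2 V → (V → X) → ℝ)

theorem logPartitionFn_congr {θ θ' : Sym2 V → ℝ} (h : ∀ e ∈ G.edgeFinset, θ e = θ' e) :
    logPartitionFn G ψ θ = logPartitionFn G ψ θ' := by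
  unfold logPartitionFn
  congr! 3 with x
  exact sum_congr rfl fun e he => by rw [h e he]

theorem logPartitionFn_sum_mul_le {ι : Type*} [Fintype ι]
    (w : ι → ℝ) (hw : ∀ i, 0 ≤ w i) (hw1 : ∑ i, w i = 1) (θ : ι → Sym2 V → ℝ) :
    logPartitionFn G ψ (fun e => ∑ i, w i * θ i e) ≤ ∑ i, w i * logPartitionFn G ψ (θ i) := by
  have hlin : ∀ x, ∑ e ∈ G.edgeFinset, (∑ i, w i * θ i e) * ψ e x
      = ∑ i, w i * ∑ e ∈ G.edgeFinset, θ i e * ψ e x := by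
    intro x
    simp only [sum_mul, mul_sum, mul_assoc]
    exact sum_comm
  unfold logPartitionFn
  simp only [hlin]
  exact Real.log_sum_exp_sum_mul_le w hw hw1 _

end logPartitionFn

theorem sum_mul_ite_div_sum_mul_ite {ι : Type*} [Fintype ι] (ρ : ι → ℝ) (p : ι → Prop)
    [DecidablePred p] (c : ℝ) (h : (∑ j, ρ j * if p j then (1 : ℝ) else 0) ≠ 0) :
    ∑ i, ρ i * (if p i then c / ∑ j, ρ j * (if p j then (1 : ℝ) else 0) else 0) = c := by
  have hsplit : ∀ i, ρ i * (if p i then c / ∑ j, ρ j * (if p j then (1 : ℝ) else 0) else 0)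
      = (ρ i * if p i then 1 else 0) * (c / ∑ j, ρ j * (if p j then (1 : ℝ) else 0)) := by
    intro i
    split_ifs <;> ring
  rw [sum_congr rfl fun i _ => hsplit i, ← sum_mul, mul_div_cancel₀ _ h]

theorem trw_upper_estimate_general
    {V X : Type*} [Fintype V] [DecidableEq V] [Fintype X]
    (G : SimpleGraph V) [DecidableRel G.Adj]
    (ψ : Sym2 V → (V → X) → ℝ)
    (θ : Sym2 V → ℝ)
    {ι : Type*} [Fintype ι] (Tr : ι → SimpleGraph V)
    (ρ : ι → ℝ) (hρ0 : ∀ i, 0 ≤ ρ i) (hρ1 : ∑ i, ρ i = 1)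
    (hpos : ∀ e ∈ G.edgeFinset,
      0 < ∑ i, ρ i * (if e ∈ (Tr i).edgeSet then (1 : ℝ) else 0)) :
    logPartitionFn G ψ θ
      ≤ ∑ i, ρ i * logPartitionFn G ψ (fun e =>
          if e ∈ (Tr i).edgeSet then
            θ e / (∑ j, ρ j * (if e ∈ (Tr j).edgeSet then (1 : ℝ) else 0))
          else 0) := by
  have hmean : ∀ e ∈ G.edgeFinset, θ e = ∑ i, ρ i *
      (if e ∈ (Tr i).edgeSet then
        θ e / (∑ j, ρ j * (if e ∈ (Tr j).edgeSet then (1 : ℝ) else 0))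
      else 0) :=
    fun e he => (sum_mul_ite_div_sum_mul_ite ρ _ (θ e) (hpos e he).ne').symm
  rw [logPartitionFn_congr G ψ hmean]
  exact logPartitionFn_sum_mul_le G ψ ρ hρ0 hρ1 _

/-- Upper estimate: for any probability distribution `ρ` on spanning trees of `G`
with all edge-appearance probabilities `ρ_e` strictly positive,
`Φ(θ) ≤ U_ρ(θ) = Σ_T ρ^T Φ(Π^T_ρ(θ))`, where `Π^T_ρ(θ)_e = 1(e∈T)·θ_e/ρ_e`. -/
theorem trw_upper_estimate
    {V X : Type*} [Fintype V] [DecidableEq V] [Fintype X] [Nonempty X]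
    (G : SimpleGraph V) [DecidableRel G.Adj] (hG : G.Connected)
    (ψ : Sym2 V → (V → X) → ℝ)
    (hpair : ∀ e ∈ G.edgeSet, ∀ x y : V → X, (∀ v ∈ e, x v = y v) → ψ e x = ψ e y)
    (θ : Sym2 V → ℝ) (hθ : ∀ e, 0 ≤ θ e)
    {ι : Type*} [Fintype ι] (Tr : ι → SimpleGraph V)
    (hsub : ∀ i, Tr i ≤ G) (htree : ∀ i, (Tr i).IsTree)
    (ρ : ι → ℝ) (hρ0 : ∀ i, 0 ≤ ρ i) (hρ1 : ∑ i, ρ i = 1)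
    (hpos : ∀ e ∈ G.edgeFinset,
      0 < ∑ i, ρ i * (if e ∈ (Tr i).edgeSet then (1 : ℝ) else 0)) :
    logPartitionFn G ψ θ
      ≤ ∑ i, ρ i * logPartitionFn G ψ (fun e =>
          if e ∈ (Tr i).edgeSet then
            θ e / (∑ j, ρ j * (if e ∈ (Tr j).edgeSet then (1 : ℝ) else 0))
          else 0) :=
  trw_upper_estimate_general G ψ θ Tr ρ hρ0 hρ1 hpos
end

section
/- For any distribution ρ on spanning trees with κ(G,ρ) := min_e ρ_e > 0, and non-negative weights and potentials, U_ρ(θ) ≤ L_ρ(θ)/κ(G,ρ), where L_ρ(θ) = Σ_T ρ^T Φ(Π^T(θ)) and U_ρ(θ) = Σ_T ρ^T Φ(Π^T_ρ(θ)). -/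
open scoped Classical

/-!
Every edge `e` of a subtree `T ≤ G` satisfies `κ ≤ ρ_e`, so
`Π^T_ρ(θ) ≤ κ⁻¹ • Π^T(θ)` coordinatewise. The log-partition function is monotone for
non-negative potentials, and `Φ(c θ) ≤ c Φ(θ)` for `c ≥ 1` because `∑ aₓ^c ≤ (∑ aₓ)^c`
(the `ℓ^c` norm is at most the `ℓ^1` norm). Since `κ ≤ ρ_e ≤ 1`, `c = κ⁻¹` is admissible,
giving `Φ(Π^T_ρ(θ)) ≤ Φ(Π^T(θ)) / κ` for every tree; average over `ρ`.
-/

theorem Real.sum_rpow_le_rpow_sum {α : Type*} {s : Finset α} {a : α → ℝ}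
    (ha : ∀ x ∈ s, 0 ≤ a x) {c : ℝ} (hc : 1 ≤ c) :
    ∑ x ∈ s, a x ^ c ≤ (∑ x ∈ s, a x) ^ c := by
  have hS : 0 ≤ ∑ x ∈ s, a x := Finset.sum_nonneg ha
  have hc0 : c - 1 + 1 ≠ 0 := by linarith
  have hsplit : ∀ {y : ℝ}, 0 ≤ y → y ^ c = y ^ (c - 1) * y := fun hy => by
    simpa using Real.rpow_add' hy hc0
  calc ∑ x ∈ s, a x ^ c ≤ ∑ x ∈ s, (∑ y ∈ s, a y) ^ (c - 1) * a x := by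
        refine Finset.sum_le_sum fun x hx => ?_
        rw [hsplit (ha x hx)]
        exact mul_le_mul_of_nonneg_right
          (Real.rpow_le_rpow (ha x hx) (Finset.single_le_sum ha hx) (by linarith)) (ha x hx)
    _ = (∑ x ∈ s, a x) ^ c := by rw [← Finset.mul_sum, ← hsplit hS]

theorem Real.log_sum_rpow_le_mul_log_sum {α : Type*} [Fintype α] [Nonempty α]
    {a : α → ℝ} (ha : ∀ x, 0 < a x) {c : ℝ} (hc : 1 ≤ c) :
    Real.log (∑ x, a x ^ c) ≤ c * Real.log (∑ x, a x) := by
  have hS : 0 < ∑ x, a x := Finset.sum_pos (fun x _ => ha x) Finset.univ_nonempty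
  rw [← Real.log_rpow hS]
  exact Real.log_le_log (Finset.sum_pos (fun x _ => Real.rpow_pos_of_pos (ha x) c)
    Finset.univ_nonempty) (Real.sum_rpow_le_rpow_sum (fun x _ => (ha x).le) hc)

section logPartitionFn

variable {V X : Type*} [Fintype V] [DecidableEq V] [Fintype X] [Nonempty X]
  (G : SimpleGraph V) [DecidableRel G.Adj] {ψ : Sym2 V → (V → X) → ℝ}

theorem logPartitionFn_mono_s7 (hψ : ∀ e x, 0 ≤ ψ e x) {θ₁ θ₂ : Sym2 V → ℝ}
    (h : ∀ e, θ₁ e ≤ θ₂ e) :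
    logPartitionFn G ψ θ₁ ≤ logPartitionFn G ψ θ₂ := by
  refine Real.log_le_log (Finset.sum_pos (fun x _ => Real.exp_pos _) Finset.univ_nonempty) ?_
  gcongr with x _ e _
  · exact hψ e x
  · exact h e

theorem logPartitionFn_const_mul_le (θ : Sym2 V → ℝ) {c : ℝ} (hc : 1 ≤ c) :
    logPartitionFn G ψ (fun e => c * θ e) ≤ c * logPartitionFn G ψ θ := by
  have hexp : ∀ x : V → X, Real.exp (∑ e ∈ G.edgeFinset, c * θ e * ψ e x)
      = Real.exp (∑ e ∈ G.edgeFinset, θ e * ψ e x) ^ c := fun x => by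
    rw [← Real.exp_mul, Finset.sum_mul]
    simp only [mul_assoc, mul_comm c]
  unfold logPartitionFn
  simp_rw [hexp]
  exact Real.log_sum_rpow_le_mul_log_sum (fun x => Real.exp_pos _) hc

theorem logPartitionFn_le_mul_of_le_const_mul (hψ : ∀ e x, 0 ≤ ψ e x)
    {θ₁ θ₂ : Sym2 V → ℝ} {c : ℝ} (hc : 1 ≤ c) (h : ∀ e, θ₁ e ≤ c * θ₂ e) :
    logPartitionFn G ψ θ₁ ≤ c * logPartitionFn G ψ θ₂ :=
  (logPartitionFn_mono_s7 G hψ h).trans (logPartitionFn_const_mul_le G θ₂ hc)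

end logPartitionFn

theorem sum_mul_boole_le_sum {ι : Type*} (s : Finset ι) {ρ : ι → ℝ} (hρ : ∀ i ∈ s, 0 ≤ ρ i)
    (p : ι → Prop) [DecidablePred p] :
    ∑ i ∈ s, ρ i * (if p i then (1 : ℝ) else 0) ≤ ∑ i ∈ s, ρ i :=
  Finset.sum_le_sum fun i hi => mul_le_of_le_one_right (hρ i hi) (by split_ifs <;> norm_num)

theorem trw_upper_le_lower_div_kappa_general
    {V X : Type*} [Fintype V] [DecidableEq V] [Fintype X] [Nonempty X]
    (G : SimpleGraph V) [DecidableRel G.Adj]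
    (hE : G.edgeFinset.Nonempty)
    (ψ : Sym2 V → (V → X) → ℝ) (hψ : ∀ e x, 0 ≤ ψ e x)
    (θ : Sym2 V → ℝ) (hθ : ∀ e, 0 ≤ θ e)
    {ι : Type*} [Fintype ι] (Tr : ι → SimpleGraph V)
    (hsub : ∀ i, Tr i ≤ G)
    (ρ : ι → ℝ) (hρ0 : ∀ i, 0 ≤ ρ i) (hρ1 : ∑ i, ρ i = 1)
    (κ : ℝ)
    (hκ : κ = G.edgeFinset.inf' hE
      (fun e => ∑ i, ρ i * (if e ∈ (Tr i).edgeSet then (1 : ℝ) else 0)))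
    (hκpos : 0 < κ) :
    ∑ i, ρ i * logPartitionFn G ψ (fun e =>
        if e ∈ (Tr i).edgeSet then
          θ e / (∑ j, ρ j * (if e ∈ (Tr j).edgeSet then (1 : ℝ) else 0))
        else 0)
      ≤ (∑ i, ρ i * logPartitionFn G ψ (fun e =>
          if e ∈ (Tr i).edgeSet then θ e else 0)) / κ := by
  set ρe : Sym2 V → ℝ := fun e => ∑ j, ρ j * (if e ∈ (Tr j).edgeSet then (1 : ℝ) else 0)
  have hκ_le : ∀ e ∈ G.edgeFinset, κ ≤ ρe e := fun e he => hκ ▸ Finset.inf'_le _ he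
  have hκ_le_one : κ ≤ 1 := by
    obtain ⟨e, he⟩ := hE
    exact (hκ_le e he).trans (hρ1 ▸ sum_mul_boole_le_sum _ (fun i _ => hρ0 i) _)
  have htree_bound : ∀ i,
      logPartitionFn G ψ (fun e => if e ∈ (Tr i).edgeSet then θ e / ρe e else 0)
        ≤ κ⁻¹ * logPartitionFn G ψ (fun e => if e ∈ (Tr i).edgeSet then θ e else 0) := by
    refine fun i => logPartitionFn_le_mul_of_le_const_mul G hψ
      ((one_le_inv₀ hκpos).2 hκ_le_one) fun e => ?_
    split_ifs with he
    · have heG : e ∈ G.edgeFinset :=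
        SimpleGraph.mem_edgeFinset.2 (SimpleGraph.edgeSet_mono (hsub i) he)
      rw [div_eq_inv_mul]
      exact mul_le_mul_of_nonneg_right (inv_anti₀ hκpos (hκ_le e heG)) (hθ e)
    · simp
  calc _ ≤ ∑ i, ρ i * (κ⁻¹ * logPartitionFn G ψ
          (fun e => if e ∈ (Tr i).edgeSet then θ e else 0)) :=
        Finset.sum_le_sum fun i _ => mul_le_mul_of_nonneg_left (htree_bound i) (hρ0 i)
    _ = _ := by
        rw [div_eq_mul_inv, Finset.sum_mul]
        exact Finset.sum_congr rfl fun i _ => by ring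

/-- For any distribution `ρ` on spanning trees with `κ(G,ρ) = min_e ρ_e > 0`, and
non-negative weights and potentials, `U_ρ(θ) ≤ L_ρ(θ)/κ(G,ρ)`. -/
theorem trw_upper_le_lower_div_kappa
    {V X : Type*} [Fintype V] [DecidableEq V] [Fintype X] [Nonempty X]
    (G : SimpleGraph V) [DecidableRel G.Adj] (hG : G.Connected)
    (hE : G.edgeFinset.Nonempty)
    (ψ : Sym2 V → (V → X) → ℝ) (hψ : ∀ e x, 0 ≤ ψ e x)
    (hpair : ∀ e ∈ G.edgeSet, ∀ x y : V → X, (∀ v ∈ e, x v = y v) → ψ e x = ψ e y)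
    (θ : Sym2 V → ℝ) (hθ : ∀ e, 0 ≤ θ e)
    {ι : Type*} [Fintype ι] (Tr : ι → SimpleGraph V)
    (hsub : ∀ i, Tr i ≤ G) (htree : ∀ i, (Tr i).IsTree)
    (ρ : ι → ℝ) (hρ0 : ∀ i, 0 ≤ ρ i) (hρ1 : ∑ i, ρ i = 1)
    (κ : ℝ)
    (hκ : κ = G.edgeFinset.inf' hE
      (fun e => ∑ i, ρ i * (if e ∈ (Tr i).edgeSet then (1 : ℝ) else 0)))
    (hκpos : 0 < κ) :
    ∑ i, ρ i * logPartitionFn G ψ (fun e =>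
        if e ∈ (Tr i).edgeSet then
          θ e / (∑ j, ρ j * (if e ∈ (Tr j).edgeSet then (1 : ℝ) else 0))
        else 0)
      ≤ (∑ i, ρ i * logPartitionFn G ψ (fun e =>
          if e ∈ (Tr i).edgeSet then θ e else 0)) / κ :=
  trw_upper_le_lower_div_kappa_general G hE ψ hψ θ hθ Tr hsub ρ hρ0 hρ1 κ hκ hκpos
end

section
/- (Girth bound) If G is a finite graph on N vertices with girth g > 3 (every cycle has length ≥ g), then κ(G) = min_{S⊆V, E(S)≠∅} (|S|−1)/|E(S)| ≥ (2/(1+N^{2/(g−3)}))·(1 − 1/g). -/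
open scoped Classical

set_option linter.unusedSectionVars false
set_option maxHeartbeats 1000000

namespace GB
open Real SimpleGraph

open Real


/-- `2 log r ≤ r - r⁻¹` for `r ≥ 1`. -/
lemma two_log_le {r : ℝ} (hr : 1 ≤ r) : 2 * Real.log r ≤ r - r⁻¹ := by
  have h0 : (0:ℝ) < 1 := one_pos
  set f : ℝ → ℝ := fun x => x - x⁻¹ - 2 * Real.log x with hf
  have hmono : MonotoneOn f (Set.Ici 1) := by
    apply monotoneOn_of_deriv_nonneg (convex_Ici 1)
    · apply ContinuousOn.sub
      · apply ContinuousOn.sub continuousOn_id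
        exact continuousOn_inv₀.mono (by intro x hx; simp at hx ⊢; linarith)
      · apply ContinuousOn.mul continuousOn_const
        exact Real.continuousOn_log.mono (by intro x hx; simp at hx ⊢; linarith)
    · rw [interior_Ici]
      intro x hx
      have hx1 : (1:ℝ) < x := hx
      have hx0 : x ≠ 0 := by positivity
      have : HasDerivAt f (1 - (-(x^2)⁻¹) - 2 * x⁻¹) x := by
        have h1 : HasDerivAt (fun x : ℝ => x) 1 x := hasDerivAt_id x
        have h2 : HasDerivAt (fun x : ℝ => x⁻¹) (-(x^2)⁻¹) x := hasDerivAt_inv hx0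
        have h3 : HasDerivAt Real.log x⁻¹ x := Real.hasDerivAt_log hx0
        exact ((h1.sub h2).sub ((h3.const_mul 2)))
      exact this.differentiableAt.differentiableWithinAt
    · rw [interior_Ici]
      intro x hx
      have hx1 : (1:ℝ) < x := hx
      have hx0 : x ≠ 0 := by positivity
      have hd : HasDerivAt f (1 - (-(x^2)⁻¹) - 2 * x⁻¹) x := by
        have h1 : HasDerivAt (fun x : ℝ => x) 1 x := hasDerivAt_id x
        have h2 : HasDerivAt (fun x : ℝ => x⁻¹) (-(x^2)⁻¹) x := hasDerivAt_inv hx0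
        have h3 : HasDerivAt Real.log x⁻¹ x := Real.hasDerivAt_log hx0
        exact ((h1.sub h2).sub ((h3.const_mul 2)))
      rw [hd.deriv]
      have : (1:ℝ) - (-(x^2)⁻¹) - 2 * x⁻¹ = (1 - x⁻¹)^2 := by
        field_simp
        ring
      rw [this]
      positivity
  have h1 : f 1 ≤ f r := hmono (by simp) (by simpa using hr) hr
  simp only [hf] at h1
  simp at h1
  linarith [h1]

/-- `log t ≥ 2 (t-1)/(t+1)` for `t ≥ 1`. -/
lemma log_ge_ratio {t : ℝ} (ht : 1 ≤ t) : 2 * (t - 1) / (t + 1) ≤ Real.log t := by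
  set f : ℝ → ℝ := fun x => Real.log x - 2 * (x - 1) / (x + 1) with hf
  have hmono : MonotoneOn f (Set.Ici 1) := by
    apply monotoneOn_of_deriv_nonneg (convex_Ici 1)
    · apply ContinuousOn.sub
      · exact Real.continuousOn_log.mono (by intro x hx; simp at hx ⊢; linarith)
      · apply ContinuousOn.div
        · exact (continuousOn_const.mul (continuousOn_id.sub continuousOn_const))
        · exact (continuousOn_id.add continuousOn_const)
        · intro x hx; simp at hx; intro h; linarith
    · rw [interior_Ici]
      intro x hx
      have hx1 : (1:ℝ) < x := hx
      have hx0 : x ≠ 0 := by positivity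
      have hxp1 : x + 1 ≠ 0 := by positivity
      have hd : HasDerivAt f (x⁻¹ - (2 * (x+1) - 2*(x-1)*1) / (x+1)^2) x := by
        have h3 : HasDerivAt Real.log x⁻¹ x := Real.hasDerivAt_log hx0
        have h4 : HasDerivAt (fun x : ℝ => 2 * (x - 1)) 2 x := by
          simpa using (((hasDerivAt_id x).sub_const 1).const_mul 2)
        have h5 : HasDerivAt (fun x : ℝ => x + 1) 1 x := (hasDerivAt_id x).add_const 1
        have := h3.sub ((h4.div h5 hxp1))
        exact this
      exact hd.differentiableAt.differentiableWithinAt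
    · rw [interior_Ici]
      intro x hx
      have hx1 : (1:ℝ) < x := hx
      have hx0 : x ≠ 0 := by positivity
      have hxp1 : x + 1 ≠ 0 := by positivity
      have hd : HasDerivAt f (x⁻¹ - (2 * (x+1) - 2*(x-1)*1) / (x+1)^2) x := by
        have h3 : HasDerivAt Real.log x⁻¹ x := Real.hasDerivAt_log hx0
        have h4 : HasDerivAt (fun x : ℝ => 2 * (x - 1)) 2 x := by
          simpa using (((hasDerivAt_id x).sub_const 1).const_mul 2)
        have h5 : HasDerivAt (fun x : ℝ => x + 1) 1 x := (hasDerivAt_id x).add_const 1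
        have := h3.sub ((h4.div h5 hxp1))
        exact this
      rw [hd.deriv]
      rw [sub_nonneg, div_le_iff₀ (by positivity), inv_eq_one_div, div_mul_eq_mul_div, le_div_iff₀ (by positivity)]
      nlinarith [sq_nonneg (x - 1)]
  have h1 : f 1 ≤ f t := hmono (by simp) (by simpa using ht) ht
  simp only [hf] at h1
  simp at h1
  linarith [h1]

/-- `log (p/q) ≤ (p - q)/√(p q)` for `1 ≤ q ≤ p`. -/
lemma log_div_le {p q : ℝ} (hq : 1 ≤ q) (hpq : q ≤ p) :
    Real.log p - Real.log q ≤ (p - q) / Real.sqrt (p * q) := by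
  have hp : (1:ℝ) ≤ p := le_trans hq hpq
  have hp0 : (0:ℝ) < p := by linarith
  have hq0 : (0:ℝ) < q := by linarith
  have hsp : (0:ℝ) < Real.sqrt p := Real.sqrt_pos.mpr hp0
  have hsq : (0:ℝ) < Real.sqrt q := Real.sqrt_pos.mpr hq0
  have hr : 1 ≤ Real.sqrt p / Real.sqrt q := by
    rw [le_div_iff₀ hsq, one_mul]
    exact Real.sqrt_le_sqrt hpq
  have key := two_log_le hr
  have hlog : Real.log (Real.sqrt p / Real.sqrt q) = (Real.log p - Real.log q) / 2 := by
    rw [Real.log_div (ne_of_gt hsp) (ne_of_gt hsq), Real.log_sqrt hp0.le, Real.log_sqrt hq0.le]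
    ring
  rw [hlog] at key
  have hsq2 : Real.sqrt q * Real.sqrt q = q := Real.mul_self_sqrt hq0.le
  have hsp2 : Real.sqrt p * Real.sqrt p = p := Real.mul_self_sqrt hp0.le
  have hrhs : Real.sqrt p / Real.sqrt q - (Real.sqrt p / Real.sqrt q)⁻¹
      = (p - q) / Real.sqrt (p * q) := by
    rw [Real.sqrt_mul hp0.le, inv_div]
    rw [div_sub_div _ _ (ne_of_gt hsq) (ne_of_gt hsp), hsp2, hsq2]
    rw [mul_comm (Real.sqrt q) (Real.sqrt p)]
  rw [hrhs] at key
  linarith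


open Real


lemma core_sl {u b : ℝ} (hu1 : 1 ≤ u) (hb1 : 1 ≤ b) :
    (b+1)*(u-b)/b ≤ (u+1)*(Real.log u - Real.log b) := by
  have hu0 : (0:ℝ) < u := by linarith
  have hb0 : (0:ℝ) < b := by linarith
  rcases le_total b u with hbu | hub
  · -- case u ≥ b
    have hlow : 2 * (u - b) / (u + b) ≤ Real.log u - Real.log b := by
      have ht : 1 ≤ u / b := by rw [le_div_iff₀ hb0, one_mul]; exact hbu
      have h := log_ge_ratio ht
      have heq : 2 * (u/b - 1) / (u/b + 1) = 2 * (u - b) / (u + b) := by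
        rw [div_eq_div_iff (by positivity) (by positivity)]
        field_simp
      have hlog : Real.log (u/b) = Real.log u - Real.log b :=
        Real.log_div (ne_of_gt hu0) (ne_of_gt hb0)
      rw [heq, hlog] at h
      exact h
    have hchain : (b+1) * (u-b) / b ≤ (u+1) * (2 * (u - b) / (u + b)) := by
      have hrw : (u+1) * (2 * (u - b) / (u + b)) = ((u+1) * (2 * (u - b))) / (u + b) := by
        ring
      rw [hrw, div_le_div_iff₀ hb0 (by positivity)]
      nlinarith [mul_nonneg (sq_nonneg (u-b)) (sub_nonneg.mpr hb1)]
    calc (b+1) * (u-b) / b ≤ (u+1) * (2 * (u - b) / (u + b)) := hchain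
      _ ≤ (u+1) * (Real.log u - Real.log b) := by
          apply mul_le_mul_of_nonneg_left hlow (by linarith)
  · -- case u ≤ b
    have hup : Real.log b - Real.log u ≤ (b - u) / Real.sqrt (b * u) := log_div_le hu1 hub
    set s := Real.sqrt (b * u) with hs
    have hs0 : (0:ℝ) < s := Real.sqrt_pos.mpr (by positivity)
    have hs2 : s ^ 2 = b * u := Real.sq_sqrt (by positivity)
    have hbu1 : (1:ℝ) ≤ b * u := by nlinarith
    have hkey : b * (u + 1) ≤ (b + 1) * s := by
      have h1 : b * (u+1) / (b+1) ≤ s := by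
        rw [hs, Real.le_sqrt (by positivity) (by positivity), div_pow,
          div_le_iff₀ (by positivity)]
        nlinarith [mul_nonneg (mul_nonneg hb0.le (sub_nonneg.mpr hub))
          (sub_nonneg.mpr hbu1)]
      rw [div_le_iff₀ (by positivity)] at h1
      linarith [h1]
    have hstep : (u+1) * ((b - u) / s) ≤ (b+1) * (b - u) / b := by
      have hrw : (u+1) * ((b - u) / s) = ((u+1) * (b - u)) / s := by ring
      rw [hrw, div_le_div_iff₀ hs0 hb0]
      have hbu' : 0 ≤ b - u := by linarith
      nlinarith [mul_le_mul_of_nonneg_left hkey hbu']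
    have hfin : (u+1) * (Real.log b - Real.log u) ≤ (b+1) * (b-u) / b := by
      calc (u+1) * (Real.log b - Real.log u) ≤ (u+1) * ((b-u)/s) := by
            apply mul_le_mul_of_nonneg_left hup (by linarith)
        _ ≤ (b+1) * (b-u) / b := hstep
    have e1 : (b+1)*(u-b)/b = -((b+1) * (b-u) / b) := by ring
    have e2 : (u+1) * (Real.log u - Real.log b) = -((u+1) * (Real.log b - Real.log u)) := by ring
    rw [e1, e2]
    linarith [hfin]

/-- supporting line for `x ↦ x log (x-1)` at `a`, on `[2,∞)`. -/
lemma support_line {x a : ℝ} (hx : 2 ≤ x) (ha : 2 ≤ a) :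
    x * Real.log (a-1) + a * (x-a) / (a-1) ≤ x * Real.log (x-1) := by
  have h := core_sl (u := x - 1) (b := a - 1) (by linarith) (by linarith)
  have e1 : ((a-1)+1)*((x-1)-(a-1))/(a-1) = a * (x - a)/(a-1) := by ring
  have e2 : ((x-1)+1) * (Real.log (x-1) - Real.log (a-1))
      = x * Real.log (x-1) - x * Real.log (a-1) := by ring
  rw [e1, e2] at h
  linarith

/-- Jensen for `x log(x-1)` with weights. -/
lemma sum_mul_log_ge {ι : Type*} (T : Finset ι) (hT : T.Nonempty) (w : ι → ℝ)
    (hw : ∀ v ∈ T, 2 ≤ w v) :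
    (∑ v ∈ T, w v) * Real.log ((∑ v ∈ T, w v) / (T.card : ℝ) - 1)
      ≤ ∑ v ∈ T, w v * Real.log (w v - 1) := by
  set S := ∑ v ∈ T, w v with hS
  have hc : (0:ℝ) < (T.card : ℝ) := by
    have := Finset.card_pos.mpr hT
    exact_mod_cast this
  set a := S / (T.card : ℝ) with hadef
  have hca : (T.card : ℝ) * a = S := by rw [hadef]; field_simp [hc.ne']
  have ha : 2 ≤ a := by
    rw [hadef, le_div_iff₀ hc]
    have h2 : ∑ v ∈ T, (2:ℝ) ≤ S := Finset.sum_le_sum hw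
    simp only [Finset.sum_const, nsmul_eq_mul] at h2
    linarith
  have hsum := Finset.sum_le_sum (fun v hv => support_line (hw v hv) ha)
  have expand : ∑ v ∈ T, (w v * Real.log (a-1) + a*(w v - a)/(a-1))
      = S * Real.log (a-1) + (a/(a-1)) * S - (a/(a-1)) * ((T.card : ℝ) * a) := by
    have hterm : ∀ v ∈ T, w v * Real.log (a-1) + a*(w v - a)/(a-1)
        = Real.log (a-1) * w v + ((a/(a-1)) * w v - (a/(a-1)) * a) := by
      intro v _; ring
    rw [Finset.sum_congr rfl hterm, Finset.sum_add_distrib, ← Finset.mul_sum,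
      Finset.sum_sub_distrib, ← Finset.mul_sum, Finset.sum_const, nsmul_eq_mul]
    rw [← hS]
    ring
  rw [expand, hca] at hsum
  have hfin : S * Real.log (a - 1) ≤ ∑ v ∈ T, w v * Real.log (w v - 1) := by linarith
  exact hfin

/-- weighted AM-GM via `1+x ≤ exp x`. -/
lemma sum_exp_ge {ι : Type*} (P : Finset ι) (μ Y : ι → ℝ) (hμ : ∀ p ∈ P, 0 ≤ μ p)
    (hY : ∀ p ∈ P, 0 < Y p) (M c : ℝ)
    (hmass : ∑ p ∈ P, μ p = M)
    (hlog : M * c ≤ ∑ p ∈ P, μ p * Real.log (Y p)) :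
    M * Real.exp c ≤ ∑ p ∈ P, μ p * Y p := by
  have key : ∀ p ∈ P, μ p * (Real.exp c * (1 + (Real.log (Y p) - c))) ≤ μ p * Y p := by
    intro p hp
    apply mul_le_mul_of_nonneg_left _ (hμ p hp)
    have h1 : (Real.log (Y p) - c) + 1 ≤ Real.exp (Real.log (Y p) - c) := Real.add_one_le_exp _
    have h2 : Real.exp c * Real.exp (Real.log (Y p) - c) = Y p := by
      rw [← Real.exp_add]
      have hc' : c + (Real.log (Y p) - c) = Real.log (Y p) := by ring
      rw [hc', Real.exp_log (hY p hp)]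
    calc Real.exp c * (1 + (Real.log (Y p) - c))
        ≤ Real.exp c * Real.exp (Real.log (Y p) - c) := by
          apply mul_le_mul_of_nonneg_left _ (Real.exp_nonneg c); linarith
      _ = Y p := h2
  have hs := Finset.sum_le_sum key
  have expand : ∑ p ∈ P, μ p * (Real.exp c * (1 + (Real.log (Y p) - c)))
      = Real.exp c * ((1-c) * M + ∑ p ∈ P, μ p * Real.log (Y p)) := by
    have hterm : ∀ p ∈ P, μ p * (Real.exp c * (1 + (Real.log (Y p) - c)))
        = Real.exp c * ((1-c) * μ p + μ p * Real.log (Y p)) := fun p _ => by ring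
    rw [Finset.sum_congr rfl hterm, ← Finset.mul_sum, Finset.sum_add_distrib, ← Finset.mul_sum, hmass]
  rw [expand] at hs
  have hexp : (0:ℝ) ≤ Real.exp c := Real.exp_nonneg c
  nlinarith [hs, mul_le_mul_of_nonneg_left hlog hexp]


section Graphs


variable {V : Type*} [Fintype V] [DecidableEq V] (G : SimpleGraph V) [DecidableRel G.Adj]

def nbrIn (T : Finset V) (v : V) : Finset V := T.filter (fun w => G.Adj v w)

def degIn (T : Finset V) (v : V) : ℕ := (nbrIn G T v).card

def eIn (T : Finset V) : Finset (Sym2 V) :=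
  G.edgeFinset.filter (fun e => ∀ x ∈ e, x ∈ T)

def dirE (T : Finset V) : Finset (V × V) := (T ×ˢ T).filter (fun z => G.Adj z.1 z.2)

lemma mem_nbrIn {T : Finset V} {v w : V} : w ∈ nbrIn G T v ↔ w ∈ T ∧ G.Adj v w := by
  simp [nbrIn]

lemma mem_dirE {T : Finset V} {z : V × V} :
    z ∈ dirE G T ↔ z.1 ∈ T ∧ z.2 ∈ T ∧ G.Adj z.1 z.2 := by
  simp [dirE, Finset.mem_product, and_assoc]

lemma mem_eIn {T : Finset V} {e : Sym2 V} :
    e ∈ eIn G T ↔ e ∈ G.edgeSet ∧ ∀ x ∈ e, x ∈ T := by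
  simp [eIn, SimpleGraph.mem_edgeFinset]

lemma mem_eIn_mk {T : Finset V} {a b : V} :
    s(a, b) ∈ eIn G T ↔ G.Adj a b ∧ a ∈ T ∧ b ∈ T := by
  rw [mem_eIn]
  simp only [SimpleGraph.mem_edgeSet]
  constructor
  · rintro ⟨h1, h2⟩
    exact ⟨h1, h2 a (by simp), h2 b (by simp)⟩
  · rintro ⟨h1, h2, h3⟩
    refine ⟨h1, ?_⟩
    intro x hx
    rcases Sym2.mem_iff.mp hx with rfl | rfl <;> assumption

/-- sum over directed edges groups by first vertex -/
lemma sum_dirE {M : Type*} [AddCommMonoid M] (T : Finset V) (F : V → V → M) :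
    ∑ z ∈ dirE G T, F z.1 z.2 = ∑ a ∈ T, ∑ b ∈ nbrIn G T a, F a b := by
  rw [dirE, Finset.sum_filter, Finset.sum_product]
  apply Finset.sum_congr rfl
  intro a _
  simp [nbrIn, Finset.sum_filter]

lemma sum_dirE_swap {M : Type*} [AddCommMonoid M] (T : Finset V) (F : V → V → M) :
    ∑ z ∈ dirE G T, F z.1 z.2 = ∑ z ∈ dirE G T, F z.2 z.1 := by
  apply Finset.sum_nbij' (fun z => (z.2, z.1)) (fun z => (z.2, z.1)) <;>
    simp only [mem_dirE] <;> intros <;>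
    first
      | rfl
      | (constructor <;> tauto) 

lemma card_dirE (T : Finset V) : (dirE G T).card = ∑ a ∈ T, degIn G T a := by
  have : (dirE G T).card = ∑ z ∈ dirE G T, (1:ℕ) := by simp
  rw [this, sum_dirE G T (fun _ _ => (1:ℕ))]
  apply Finset.sum_congr rfl
  intro a _
  simp [degIn]

/-- each undirected edge in `T` has exactly two directed versions -/
lemma card_dirE_eq_twice (T : Finset V) : (dirE G T).card = 2 * (eIn G T).card := by
  have hmap : ∀ z ∈ dirE G T, s(z.1, z.2) ∈ eIn G T := by
    intro z hz
    rw [mem_dirE] at hz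
    rw [mem_eIn_mk]
    tauto
  rw [Finset.card_eq_sum_card_fiberwise hmap]
  rw [Finset.sum_congr rfl (fun e he => ?_), Finset.sum_const, smul_eq_mul, mul_comm]
  -- fiber over e=s(a,b) is {(a,b),(b,a)}
  revert he
  refine Sym2.ind (fun a b => ?_) e
  intro he
  rw [mem_eIn_mk] at he
  obtain ⟨hab, haT, hbT⟩ := he
  have : (dirE G T).filter (fun z => s(z.1, z.2) = s(a, b)) = {(a, b), (b, a)} := by
    ext z
    simp only [Finset.mem_filter, mem_dirE, Finset.mem_insert, Finset.mem_singleton]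
    constructor
    · rintro ⟨⟨h1, h2, h3⟩, h4⟩
      rw [Sym2.eq_iff] at h4
      rcases h4 with ⟨rfl, rfl⟩ | ⟨rfl, rfl⟩
      · left; rfl
      · right; rfl
    · rintro (rfl | rfl)
      · exact ⟨⟨haT, hbT, hab⟩, rfl⟩
      · exact ⟨⟨hbT, haT, hab.symm⟩, by rw [Sym2.eq_swap]⟩
  rw [this]
  rw [Finset.card_insert_of_notMem, Finset.card_singleton]
  simp only [Finset.mem_singleton]
  intro h
  have : a = b := by
    have := congrArg Prod.fst h
    exact this
  exact hab.ne this

lemma handshake (T : Finset V) : ∑ a ∈ T, degIn G T a = 2 * (eIn G T).card := by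
  rw [← card_dirE, card_dirE_eq_twice]

/-- edges incident to `v` within `T` -/
lemma card_eIn_filter_mem {T : Finset V} {v : V} (hv : v ∈ T) :
    ((eIn G T).filter (fun e => v ∈ e)).card = degIn G T v := by
  rw [degIn]
  symm
  apply Finset.card_bij (fun w _ => s(v, w))
  · intro w hw
    rw [mem_nbrIn] at hw
    simp only [Finset.mem_filter, mem_eIn_mk]
    exact ⟨⟨hw.2, hv, hw.1⟩, by simp⟩
  · intro w1 h1 w2 h2 heq
    rw [Sym2.eq_iff] at heq
    rcases heq with ⟨_, h⟩ | ⟨h1', h2'⟩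
    · exact h
    · rw [mem_nbrIn] at h1
      exact absurd h2'.symm h1.2.ne
  · intro e he
    simp only [Finset.mem_filter] at he
    obtain ⟨he1, hve⟩ := he
    induction e using Sym2.ind with
    | _ a b =>
      rw [mem_eIn_mk] at he1
      obtain ⟨hab, haT, hbT⟩ := he1
      rcases Sym2.mem_iff.mp hve with rfl | rfl
      · exact ⟨b, by rw [mem_nbrIn]; exact ⟨hbT, hab⟩, rfl⟩
      · exact ⟨a, by rw [mem_nbrIn]; exact ⟨haT, hab.symm⟩, by rw [Sym2.eq_swap]⟩





def walkF (G : SimpleGraph V) : (k : ℕ) → (f : Fin (k+1) → V) →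
    (∀ i : Fin k, G.Adj (f i.castSucc) (f i.succ)) → G.Walk (f 0) (f (Fin.last k))
  | 0, f, _ => SimpleGraph.Walk.nil.copy rfl (by rw [Fin.last_zero])
  | (k+1), f, h =>
    SimpleGraph.Walk.cons (show G.Adj (f 0) ((fun i : Fin (k+1) => f i.succ) 0) by simpa using h 0)
      ((walkF G k (fun i => f i.succ)
          (fun i => by simpa using h i.succ)).copy rfl
        (by rw [Fin.succ_last]))

lemma walkF_support (G : SimpleGraph V) : ∀ (k : ℕ) (f : Fin (k+1) → V)
    (h : ∀ i : Fin k, G.Adj (f i.castSucc) (f i.succ)),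
    (walkF G k f h).support = List.ofFn f := by
  intro k
  induction k with
  | zero =>
    intro f h
    simp [walkF, List.ofFn_succ]
  | succ k ih =>
    intro f h
    rw [walkF]
    rw [SimpleGraph.Walk.support_cons, SimpleGraph.Walk.support_copy, ih]
    simp [List.ofFn_succ]

lemma walkF_length (G : SimpleGraph V) : ∀ (k : ℕ) (f : Fin (k+1) → V)
    (h : ∀ i : Fin k, G.Adj (f i.castSucc) (f i.succ)),
    (walkF G k f h).length = k := by
  intro k
  induction k with
  | zero => intro f h; simp [walkF]
  | succ k ih =>
    intro f h
    rw [walkF]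
    rw [SimpleGraph.Walk.length_cons, SimpleGraph.Walk.length_copy, ih]

lemma walkF_edges (G : SimpleGraph V) : ∀ (k : ℕ) (f : Fin (k+1) → V)
    (h : ∀ i : Fin k, G.Adj (f i.castSucc) (f i.succ)),
    (walkF G k f h).edges = List.ofFn (fun i : Fin k => s(f i.castSucc, f i.succ)) := by
  intro k
  induction k with
  | zero => intro f h; simp [walkF]
  | succ k ih =>
    intro f h
    rw [walkF]
    rw [SimpleGraph.Walk.edges_cons, SimpleGraph.Walk.edges_copy, ih]
    simp [List.ofFn_succ]

lemma walkF_isPath (G : SimpleGraph V) (k : ℕ) (f : Fin (k+1) → V)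
    (h : ∀ i : Fin k, G.Adj (f i.castSucc) (f i.succ)) (hinj : Function.Injective f) :
    (walkF G k f h).IsPath := by
  rw [SimpleGraph.Walk.isPath_def, walkF_support]
  exact List.nodup_ofFn.mpr hinj

/-- Main tool: an injective closed chain of length `k+1 < g` contradicts girth. -/
lemma no_short_cycle {G : SimpleGraph V} {g : ℕ}
    (hgirth : ∀ (v : V) (c : G.Walk v v), c.IsCycle → g ≤ c.length)
    {k : ℕ} (hk2 : 2 ≤ k) (hkg : k + 1 < g) (f : Fin (k+1) → V)
    (hadj : ∀ i : Fin k, G.Adj (f i.castSucc) (f i.succ))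
    (hcl : G.Adj (f (Fin.last k)) (f 0))
    (hinj : Function.Injective f) : False := by
  have hpath : (walkF G k f hadj).IsPath := walkF_isPath G k f hadj hinj
  set p : G.Path (f 0) (f (Fin.last k)) := ⟨walkF G k f hadj, hpath⟩ with hp
  have he : s(f (Fin.last k), f 0) ∉ (p : G.Walk (f 0) (f (Fin.last k))).edges := by
    rw [hp]
    simp only [walkF_edges]
    intro hmem
    rw [List.mem_ofFn] at hmem
    obtain ⟨i, hi⟩ := hmem
    rw [Sym2.eq_iff] at hi
    rcases hi with ⟨h1, h2⟩ | ⟨h1, h2⟩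
    · have : i.castSucc = Fin.last k := hinj h1
      exact absurd this (Fin.castSucc_lt_last i).ne
    · have hi0 : i.castSucc = (0 : Fin (k+1)) := hinj h1
      have hi1 : i.succ = Fin.last k := hinj h2
      have : (i : ℕ) = 0 := by
        have := congrArg Fin.val hi0
        simpa using this
      have : (i : ℕ) + 1 = k := by
        have := congrArg Fin.val hi1
        simpa using this
      omega
  have hcyc : (SimpleGraph.Walk.cons hcl (p : G.Walk (f 0) (f (Fin.last k)))).IsCycle :=
    SimpleGraph.Path.cons_isCycle p hcl he
  have hlen := hgirth _ _ hcyc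
  rw [SimpleGraph.Walk.length_cons] at hlen
  rw [hp] at hlen
  simp only [walkF_length] at hlen
  omega



section Paths

variable {g : ℕ}

def pathF (T : Finset V) (j : ℕ) : Finset (Fin (j+1) → V) :=
  Finset.univ.filter (fun p => (∀ k, p k ∈ T) ∧ (∀ k : Fin j, G.Adj (p k.castSucc) (p k.succ))
    ∧ Function.Injective p)

lemma mem_pathF {T : Finset V} {j : ℕ} {p : Fin (j+1) → V} :
    p ∈ pathF G T j ↔ (∀ k, p k ∈ T) ∧ (∀ k : Fin j, G.Adj (p k.castSucc) (p k.succ))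
      ∧ Function.Injective p := by simp [pathF]

noncomputable def invd (T : Finset V) (v : V) : ℝ := ((degIn G T v : ℝ) - 1)⁻¹

def extQ (T : Finset V) {j : ℕ} (q : Fin (j+2) → V) : Finset V :=
  (nbrIn G T (q 0)).erase (q 1)

lemma adj01 {T : Finset V} {j : ℕ} {q : Fin (j+2) → V} (hq : q ∈ pathF G T (j+1)) :
    G.Adj (q 0) (q 1) := by
  have h := ((mem_pathF (G := G)).mp hq).2.1 0
  simpa using h

lemma snd_mem_nbr {T : Finset V} {j : ℕ} {q : Fin (j+2) → V} (hq : q ∈ pathF G T (j+1)) :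
    q 1 ∈ nbrIn G T (q 0) := by
  rw [mem_nbrIn]
  exact ⟨((mem_pathF (G := G)).mp hq).1 1, adj01 G hq⟩

lemma card_extQ {T : Finset V} {j : ℕ} {q : Fin (j+2) → V} (hq : q ∈ pathF G T (j+1)) :
    (extQ G T q).card = degIn G T (q 0) - 1 := by
  rw [extQ, Finset.card_erase_of_mem (snd_mem_nbr G hq)]
  rfl

lemma cons_mem_iff
    (hgirth : ∀ (v : V) (c : G.Walk v v), c.IsCycle → g ≤ c.length)
    {T : Finset V} {j : ℕ} (hjL : j + 3 ≤ g) {q : Fin (j+2) → V}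
    (hq : q ∈ pathF G T (j+1)) (w : V) :
    Fin.cons w q ∈ pathF G T (j+2) ↔ w ∈ extQ G T q := by
  obtain ⟨hmem, hadj, hinj⟩ := (mem_pathF (G := G)).mp hq
  constructor
  · intro hp
    obtain ⟨hmem', hadj', hinj'⟩ := (mem_pathF (G := G)).mp hp
    rw [extQ, Finset.mem_erase, mem_nbrIn]
    refine ⟨?_, ?_, ?_⟩
    · intro hw
      have h02 : (Fin.cons w q : Fin (j+3) → V) 0 = (Fin.cons w q : Fin (j+3) → V) ((1 : Fin (j+2)).succ) := by
        rw [Fin.cons_zero, Fin.cons_succ]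
        exact hw
      have := hinj' h02
      have hval := congrArg Fin.val this
      simp [Fin.val_succ] at hval
      rw [Nat.mod_eq_of_lt (by omega)] at hval
      omega
    · have := hmem' 0
      simpa using this
    · have h := hadj' 0
      have h' : G.Adj w (q 0) := by
        have e1 : ((0 : Fin (j+2)).castSucc) = (0 : Fin (j+3)) := by
          apply Fin.ext; simp
        have e2 : ((0 : Fin (j+2)).succ) = ((0 : Fin (j+1)).succ : Fin (j+2)).castSucc ∨ True := Or.inr trivial
        rw [e1] at h
        rw [Fin.cons_zero] at h
        have e3 : (Fin.cons w q : Fin (j+3) → V) ((0 : Fin (j+2)).succ) = q 0 := by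
          rw [Fin.cons_succ]
        rw [e3] at h
        exact h
      exact h'.symm
  · intro hw
    rw [extQ, Finset.mem_erase, mem_nbrIn] at hw
    obtain ⟨hwq1, hwT, hadj0⟩ := hw
    have hwrange : ∀ i : Fin (j+2), w ≠ q i := by
      intro i hwi
      have hi0 : (i : ℕ) ≠ 0 := by
        intro h0
        have : i = 0 := Fin.ext (by simpa using h0)
        subst this
        exact hadj0.ne' hwi
      have hi1 : (i : ℕ) ≠ 1 := by
        intro h1
        have : i = 1 := Fin.ext (by simpa using h1)
        subst this
        exact hwq1 hwi
      have hm2 : 2 ≤ (i : ℕ) := by omega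
      have hmlt : (i : ℕ) < j + 2 := i.isLt
      refine no_short_cycle (G := G) hgirth (k := (i : ℕ)) hm2 (by omega)
        (fun s : Fin ((i:ℕ)+1) => q (Fin.castLE (by omega) s)) ?_ ?_ ?_
      · intro s
        have h := hadj ⟨(s : ℕ), by omega⟩
        convert h using 2 <;> (apply Fin.ext; simp)
      · have h : G.Adj (q i) (q 0) := by
          rw [← hwi]; exact hadj0.symm
        convert h using 2 <;> (apply Fin.ext; simp)
      · exact hinj.comp (Fin.castLE_injective _)
    rw [mem_pathF]
    refine ⟨?_, ?_, ?_⟩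
    · intro k
      induction k using Fin.cases with
      | zero => simpa using hwT
      | succ i => simpa using hmem i
    · intro k
      induction k using Fin.cases with
      | zero =>
        have e1 : ((0 : Fin (j+2)).castSucc) = (0 : Fin (j+3)) := by apply Fin.ext; simp
        rw [e1, Fin.cons_zero, Fin.cons_succ]
        exact hadj0.symm
      | succ i =>
        rw [← Fin.succ_castSucc, Fin.cons_succ, Fin.cons_succ]
        exact hadj i
    · intro a b hab
      induction a using Fin.cases with
      | zero =>
        induction b using Fin.cases with
        | zero => rfl
        | succ i =>
          rw [Fin.cons_zero, Fin.cons_succ] at hab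
          exact absurd hab (hwrange i)
      | succ i =>
        induction b using Fin.cases with
        | zero =>
          rw [Fin.cons_zero, Fin.cons_succ] at hab
          exact absurd hab.symm (hwrange i)
        | succ i' =>
          rw [Fin.cons_succ, Fin.cons_succ] at hab
          rw [hinj hab]

lemma tail_mem {T : Finset V} {j : ℕ} {p : Fin (j+3) → V} (hp : p ∈ pathF G T (j+2)) :
    Fin.tail p ∈ pathF G T (j+1) := by
  obtain ⟨hmem, hadj, hinj⟩ := (mem_pathF (G := G)).mp hp
  rw [mem_pathF]
  refine ⟨fun k => hmem _, fun k => ?_, fun a b hab => ?_⟩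
  · have h := hadj k.succ
    rw [← Fin.succ_castSucc] at h
    exact h
  · have : p a.succ = p b.succ := hab
    exact Fin.succ_injective _ (hinj this)

lemma sum_split
    (hgirth : ∀ (v : V) (c : G.Walk v v), c.IsCycle → g ≤ c.length)
    {T : Finset V} {j : ℕ} (hjL : j + 3 ≤ g) {M : Type*} [AddCommMonoid M]
    (Φ : (Fin (j+3) → V) → M) :
    ∑ p ∈ pathF G T (j+2), Φ p
      = ∑ q ∈ pathF G T (j+1), ∑ w ∈ extQ G T q, Φ (Fin.cons w q) := by
  rw [Finset.sum_sigma' (pathF G T (j+1)) (fun q => extQ G T q) (fun q w => Φ (Fin.cons w q))]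
  symm
  apply Finset.sum_bij' (i := fun x (_ : x ∈ (pathF G T (j+1)).sigma (fun q => extQ G T q)) =>
      Fin.cons x.2 x.1)
    (j := fun p (_ : p ∈ pathF G T (j+2)) => ⟨Fin.tail p, p 0⟩)
  · intro x hx
    rw [Finset.mem_sigma] at hx
    exact (cons_mem_iff G hgirth hjL hx.1 x.2).mpr hx.2
  · intro p hp
    rw [Finset.mem_sigma]
    have ht := tail_mem G hp
    refine ⟨ht, ?_⟩
    have := (cons_mem_iff G hgirth hjL ht (p 0)).mp
    rw [Fin.cons_self_tail] at this
    exact this hp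
  · intro x hx
    simp
  · intro p hp
    exact Fin.cons_self_tail p
  · intro x hx
    rfl

noncomputable def ω (T : Finset V) (n : ℕ) (p : Fin (n+1) → V) : ℝ :=
  ∏ k : Fin (n+1), (if 0 < (k:ℕ) ∧ (k:ℕ) < n then invd G T (p k) else 1)

lemma ω_cons {T : Finset V} {j : ℕ} (q : Fin (j+2) → V) (w : V) :
    ω G T (j+2) (Fin.cons w q) = invd G T (q 0) * ω G T (j+1) q := by
  have hL : ω G T (j+2) (Fin.cons w q)
      = ∏ k : Fin (j+2), (if (k:ℕ) < j+1 then invd G T (q k) else 1) := by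
    rw [ω, Fin.prod_univ_succ]
    have h0 : (if 0 < ((0 : Fin (j+3)) : ℕ) ∧ ((0 : Fin (j+3)) : ℕ) < j+2 then
        invd G T ((Fin.cons w q : Fin (j+3) → V) 0) else 1) = 1 := by
      simp
    rw [h0, one_mul]
    apply Finset.prod_congr rfl
    intro k _
    rw [Fin.cons_succ]
    apply if_congr ?_ rfl rfl
    simp [Fin.val_succ]
  rw [hL]
  have hR : ω G T (j+1) q
      = ∏ k : Fin (j+1), (if (k:ℕ) < j then invd G T (q k.succ) else 1) := by
    rw [ω, Fin.prod_univ_succ]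
    have h0 : (if 0 < ((0 : Fin (j+2)) : ℕ) ∧ ((0 : Fin (j+2)) : ℕ) < j+1 then
        invd G T (q 0) else 1) = 1 := by
      simp
    rw [h0, one_mul]
    apply Finset.prod_congr rfl
    intro k _
    apply if_congr ?_ rfl rfl
    simp [Fin.val_succ]
  rw [hR, Fin.prod_univ_succ]
  have h0' : (if ((0 : Fin (j+2)) : ℕ) < j+1 then invd G T (q 0) else 1) = invd G T (q 0) := by
    simp
  rw [h0']
  congr 1
  apply Finset.prod_congr rfl
  intro k _
  apply if_congr ?_ rfl rfl
  simp [Fin.val_succ]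

end Paths


section Dsum

variable {g : ℕ}

noncomputable def dsum (T : Finset V) (j : ℕ) (F : V → V → ℝ) : ℝ :=
  ∑ p ∈ pathF G T (j+1), ω G T (j+1) p * F (p 0) (p 1)

lemma dsum_zero (T : Finset V) (F : V → V → ℝ) :
    dsum G T 0 F = ∑ z ∈ dirE G T, F z.1 z.2 := by
  rw [dsum]
  have hω : ∀ p ∈ pathF G T 1, ω G T 1 p * F (p 0) (p 1) = F (p 0) (p 1) := by
    intro p _
    have h1 : ω G T 1 p = 1 := by
      rw [ω]
      apply Finset.prod_eq_one
      intro k _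
      have : ¬(0 < (k:ℕ) ∧ (k:ℕ) < 1) := by omega
      rw [if_neg this]
    rw [h1, one_mul]
  rw [Finset.sum_congr rfl hω]
  apply Finset.sum_bij' (i := fun p (_ : p ∈ pathF G T 1) => ((p 0, p 1) : V × V))
    (j := fun z (_ : z ∈ dirE G T) => (fun k : Fin 2 => if k = 0 then z.1 else z.2))
  · intro p hp
    obtain ⟨hmem, hadj, hinj⟩ := (mem_pathF (G := G)).mp hp
    rw [mem_dirE]
    have h := hadj 0
    exact ⟨hmem 0, hmem 1, by simpa using h⟩
  · intro z hz
    rw [mem_dirE] at hz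
    rw [mem_pathF]
    refine ⟨?_, ?_, ?_⟩
    · intro k; fin_cases k <;> simp [hz.1, hz.2.1]
    · intro k
      fin_cases k
      simpa using hz.2.2
    · intro a b hab
      fin_cases a <;> fin_cases b <;> simp_all
  · intro p hp
    funext k
    fin_cases k <;> simp
  · intro z hz
    simp
  · intro p hp
    simp

lemma dsum_succ (hgirth : ∀ (v : V) (c : G.Walk v v), c.IsCycle → g ≤ c.length)
    (T : Finset V) {j : ℕ} (hjL : j + 3 ≤ g) (F : V → V → ℝ) :
    dsum G T (j+1) F = dsum G T j (fun a b =>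
      invd G T a * ((∑ w ∈ nbrIn G T a, F w a) - F b a)) := by
  rw [dsum]
  rw [sum_split G hgirth hjL (fun p => ω G T (j+2) p * F (p 0) (p 1))]
  apply Finset.sum_congr rfl
  intro q hq
  have hc : ∀ w ∈ extQ G T q,
      ω G T (j+2) (Fin.cons w q) * F ((Fin.cons w q : Fin (j+3) → V) 0)
        ((Fin.cons w q : Fin (j+3) → V) 1)
      = invd G T (q 0) * ω G T (j+1) q * F w (q 0) := by
    intro w _
    rw [ω_cons]
    rw [show ((1 : Fin (j+3))) = Fin.succ (0 : Fin (j+2)) from (Fin.succ_zero_eq_one).symm]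
    rw [Fin.cons_succ, Fin.cons_zero]
  rw [Finset.sum_congr rfl hc, ← Finset.mul_sum]
  rw [extQ, Finset.sum_erase_eq_sub (snd_mem_nbr G hq)]
  beta_reduce
  ring

lemma dsum_eq (hgirth : ∀ (v : V) (c : G.Walk v v), c.IsCycle → g ≤ c.length)
    (T : Finset V) (hdeg : ∀ v ∈ T, 2 ≤ degIn G T v) :
    ∀ (j : ℕ), j + 2 ≤ g → ∀ F, dsum G T j F = ∑ z ∈ dirE G T, F z.1 z.2 := by
  intro j
  induction j with
  | zero => intro _ F; exact dsum_zero G T F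
  | succ j ih =>
    intro hj F
    rw [dsum_succ G hgirth T (by omega) F, ih (by omega)]
    rw [sum_dirE G T (fun a b => invd G T a * ((∑ w ∈ nbrIn G T a, F w a) - F b a))]
    have key : ∀ a ∈ T, ∑ b ∈ nbrIn G T a,
        invd G T a * ((∑ w ∈ nbrIn G T a, F w a) - F b a)
        = ∑ b ∈ nbrIn G T a, F b a := by
      intro a ha
      have hd2 : 2 ≤ degIn G T a := hdeg a ha
      have hne : ((degIn G T a : ℝ) - 1) ≠ 0 := by
        have h2 : (2:ℝ) ≤ (degIn G T a : ℝ) := by exact_mod_cast hd2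
        linarith
      have e1 : ∑ b ∈ nbrIn G T a, invd G T a * ((∑ w ∈ nbrIn G T a, F w a) - F b a)
          = invd G T a * ((degIn G T a : ℝ) * (∑ w ∈ nbrIn G T a, F w a)
              - (∑ b ∈ nbrIn G T a, F b a)) := by
        rw [← Finset.mul_sum, Finset.sum_sub_distrib, Finset.sum_const, nsmul_eq_mul]
        rfl
      rw [e1]
      have e2 : invd G T a * ((degIn G T a : ℝ) * (∑ w ∈ nbrIn G T a, F w a)
          - (∑ b ∈ nbrIn G T a, F b a))
          = (invd G T a * ((degIn G T a : ℝ) - 1)) * (∑ w ∈ nbrIn G T a, F w a) := by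
        ring
      rw [e2, invd, inv_mul_cancel₀ hne, one_mul]
    rw [Finset.sum_congr rfl key]
    rw [← sum_dirE G T (fun a b => F b a)]
    exact (sum_dirE_swap G T F).symm

lemma marg (hgirth : ∀ (v : V) (c : G.Walk v v), c.IsCycle → g ≤ c.length)
    (T : Finset V) (hdeg : ∀ v ∈ T, 2 ≤ degIn G T v) :
    ∀ (k j : ℕ), 1 ≤ k → ∀ (h2 : k ≤ j), j + 2 ≤ g → ∀ (φ : V → ℝ),
    ∑ p ∈ pathF G T (j+1), ω G T (j+1) p * φ (p ⟨k, by omega⟩) = ∑ z ∈ dirE G T, φ z.2 := by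
  intro k
  induction k with
  | zero => intro j h1; exact absurd h1 (by omega)
  | succ k ih =>
    intro j h1 h2 hj φ
    by_cases hk0 : k = 0
    · subst hk0
      have hd := dsum_eq G hgirth T hdeg j (by omega) (fun a b => φ b)
      rw [dsum] at hd
      have hidx : ∀ p ∈ pathF G T (j+1),
          ω G T (j+1) p * φ (p ⟨0+1, by omega⟩) = ω G T (j+1) p * φ (p 1) := by
        intro p _
        have he : (⟨0+1, by omega⟩ : Fin (j+2)) = 1 := by
          apply Fin.ext
          simp [Fin.val_one]
        rw [he]
      rw [Finset.sum_congr rfl hidx]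
      exact hd
    · have hk1 : 1 ≤ k := by omega
      obtain ⟨j', rfl⟩ : ∃ j', j = j' + 1 := ⟨j - 1, by omega⟩
      rw [sum_split G hgirth (by omega)
        (fun p => ω G T (j'+2) p * φ (p ⟨k+1, by omega⟩))]
      have key : ∀ q ∈ pathF G T (j'+1),
          ∑ w ∈ extQ G T q, ω G T (j'+2) (Fin.cons w q)
            * φ ((Fin.cons w q : Fin (j'+3) → V) ⟨k+1, by omega⟩)
          = ω G T (j'+1) q * φ (q ⟨k, by omega⟩) := by
        intro q hq
        have hq0T : q 0 ∈ T := ((mem_pathF (G := G)).mp hq).1 0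
        have hidx : ∀ w : V, (Fin.cons w q : Fin (j'+3) → V) ⟨k+1, by omega⟩
            = q ⟨k, by omega⟩ := by
          intro w
          have he : (⟨k+1, by omega⟩ : Fin (j'+3)) = Fin.succ ⟨k, by omega⟩ :=
            Fin.ext (by simp)
          rw [he, Fin.cons_succ]
        have hterm : ∀ w ∈ extQ G T q,
            ω G T (j'+2) (Fin.cons w q) * φ ((Fin.cons w q : Fin (j'+3) → V) ⟨k+1, by omega⟩)
            = invd G T (q 0) * ω G T (j'+1) q * φ (q ⟨k, by omega⟩) := by
          intro w _
          rw [hidx w, ω_cons]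
        rw [Finset.sum_congr rfl hterm, Finset.sum_const, card_extQ G hq, nsmul_eq_mul]
        have hd2 : 2 ≤ degIn G T (q 0) := hdeg _ hq0T
        have hcast : (((degIn G T (q 0) - 1 : ℕ) : ℝ)) = (degIn G T (q 0) : ℝ) - 1 := by
          have h1' : 1 ≤ degIn G T (q 0) := by omega
          push_cast [Nat.cast_sub h1']
          ring
        have hne : ((degIn G T (q 0) : ℝ) - 1) ≠ 0 := by
          have h2' : (2:ℝ) ≤ (degIn G T (q 0):ℝ) := by exact_mod_cast hd2
          linarith
        rw [hcast, invd]
        field_simp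
      rw [Finset.sum_congr rfl key]
      exact ih (j') hk1 (by omega) (by omega) φ

lemma mass (hgirth : ∀ (v : V) (c : G.Walk v v), c.IsCycle → g ≤ c.length)
    (T : Finset V) (hdeg : ∀ v ∈ T, 2 ≤ degIn G T v) (j : ℕ) (hj : j + 2 ≤ g) :
    ∑ p ∈ pathF G T (j+1), ω G T (j+1) p = ((dirE G T).card : ℝ) := by
  have hd := dsum_eq G hgirth T hdeg j hj (fun _ _ => 1)
  rw [dsum] at hd
  simpa using hd

end Dsum


section Count

variable {g : ℕ}

lemma pathF_card_le
    (hgirth : ∀ (v : V) (c : G.Walk v v), c.IsCycle → g ≤ c.length)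
    {T : Finset V} {n : ℕ} (hn : 2 * n + 1 ≤ g) :
    (pathF G T n).card ≤ T.card * T.card := by
  have hmaps : ∀ p ∈ pathF G T n, ((p 0, p (Fin.last n)) : V × V) ∈ T ×ˢ T := by
    intro p hp
    obtain ⟨hm, _, _⟩ := (mem_pathF (G := G)).mp hp
    rw [Finset.mem_product]
    exact ⟨hm 0, hm _⟩
  have h := Finset.card_le_card_of_injOn (fun (p : Fin (n+1) → V) => ((p 0, p (Fin.last n)) : V × V)) hmaps ?_
  · rw [Finset.card_product] at h
    exact h
  intro p hp q hq hpq
  simp only [Finset.mem_coe] at hp hq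
  obtain ⟨hpm, hpa, hpi⟩ := (mem_pathF (G := G)).mp hp
  obtain ⟨hqm, hqa, hqi⟩ := (mem_pathF (G := G)).mp hq
  have h0 : p 0 = q 0 := congrArg Prod.fst hpq
  have hl : p (Fin.last n) = q (Fin.last n) := congrArg Prod.snd hpq
  by_contra hne
  set EF : Finset (Sym2 V) :=
    (Finset.image (fun i : Fin n => s(p i.castSucc, p i.succ)) Finset.univ)
      ∪ (Finset.image (fun i : Fin n => s(q i.castSucc, q i.succ)) Finset.univ) with hEF
  set G' : SimpleGraph V := SimpleGraph.fromEdgeSet ↑EF with hG'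
  have hadj' : ∀ (r : Fin (n+1) → V), Function.Injective r →
      (∀ i : Fin n, s(r i.castSucc, r i.succ) ∈ EF) →
      ∀ i : Fin n, G'.Adj (r i.castSucc) (r i.succ) := by
    intro r hri hmem i
    rw [hG', SimpleGraph.fromEdgeSet_adj]
    refine ⟨by exact_mod_cast hmem i, ?_⟩
    intro hEqv
    have h2 := hri hEqv
    have hv := congrArg Fin.val h2
    simp [Fin.val_succ] at hv
  have hpe : ∀ i : Fin n, s(p i.castSucc, p i.succ) ∈ EF := fun i =>
    Finset.mem_union_left _ (Finset.mem_image_of_mem _ (Finset.mem_univ i))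
  have hqe : ∀ i : Fin n, s(q i.castSucc, q i.succ) ∈ EF := fun i =>
    Finset.mem_union_right _ (Finset.mem_image_of_mem _ (Finset.mem_univ i))
  have hpadj := hadj' p hpi hpe
  have hqadj := hadj' q hqi hqe
  set Pp : G'.Path (p 0) (p (Fin.last n)) :=
    ⟨walkF G' n p hpadj, walkF_isPath G' n p hpadj hpi⟩ with hPp
  set Pq : G'.Path (p 0) (p (Fin.last n)) :=
    ⟨(walkF G' n q hqadj).copy h0.symm hl.symm, by
      rw [SimpleGraph.Walk.isPath_copy]
      exact walkF_isPath G' n q hqadj hqi⟩ with hPq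
  have hPne : Pp ≠ Pq := by
    intro hEq
    apply hne
    have hsupp := congrArg (fun (P : G'.Path (p 0) (p (Fin.last n))) =>
      (P : G'.Walk (p 0) (p (Fin.last n))).support) hEq
    simp only [hPp, hPq] at hsupp
    rw [walkF_support, SimpleGraph.Walk.support_copy, walkF_support] at hsupp
    exact List.ofFn_inj.mp hsupp
  have hnac : ¬ G'.IsAcyclic := by
    intro hac
    exact hPne (SimpleGraph.isAcyclic_iff_path_unique.mp hac Pp Pq)
  obtain ⟨v, c, hc⟩ : ∃ (v : V) (c : G'.Walk v v), c.IsCycle := by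
    by_contra hcon
    push_neg at hcon
    exact hnac (fun v c => hcon v c)
  have hsub2 : ∀ e ∈ c.edges, e ∈ EF := by
    intro e he
    have h1 : e ∈ G'.edgeSet := SimpleGraph.Walk.edges_subset_edgeSet c he
    rw [hG', SimpleGraph.edgeSet_fromEdgeSet] at h1
    exact_mod_cast h1.1
  have hsub : ∀ e ∈ c.edges, e ∈ G.edgeSet := by
    intro e he
    have h2 := hsub2 e he
    rw [hEF] at h2
    rcases Finset.mem_union.mp h2 with h3 | h3
    · obtain ⟨i, _, rfl⟩ := Finset.mem_image.mp h3
      exact (hpa i)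
    · obtain ⟨i, _, rfl⟩ := Finset.mem_image.mp h3
      exact (hqa i)
  have hct : (c.transfer G hsub).IsCycle := hc.transfer hsub
  have hglen := hgirth _ _ hct
  rw [SimpleGraph.Walk.length_transfer] at hglen
  have hnodup : c.edges.Nodup := hc.1.1.edges_nodup
  have hlen : c.length ≤ EF.card := by
    calc c.length = c.edges.length := (SimpleGraph.Walk.length_edges c).symm
      _ = c.edges.toFinset.card := (List.toFinset_card_of_nodup hnodup).symm
      _ ≤ EF.card := Finset.card_le_card (fun e he => hsub2 e (List.mem_toFinset.mp he))
  have hEFcard : EF.card ≤ 2 * n := by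
    calc EF.card ≤ _ + _ := Finset.card_union_le _ _
      _ ≤ 2 * n := by
        have h1 := Finset.card_image_le (s := (Finset.univ : Finset (Fin n)))
          (f := fun i : Fin n => s(p i.castSucc, p i.succ))
        have h2 := Finset.card_image_le (s := (Finset.univ : Finset (Fin n)))
          (f := fun i : Fin n => s(q i.castSucc, q i.succ))
        simp only [Finset.card_univ, Fintype.card_fin] at h1 h2
        omega
  omega

end Count


section Core

variable {g : ℕ}

noncomputable def Yp (T : Finset V) (n : ℕ) (p : Fin (n+1) → V) : ℝ :=
  ∏ k : Fin (n+1), (if 0 < (k:ℕ) ∧ (k:ℕ) < n then ((degIn G T (p k) : ℝ) - 1) else 1)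

lemma deg_ne {T : Finset V} (hdeg : ∀ v ∈ T, 2 ≤ degIn G T v) {v : V} (hv : v ∈ T) :
    ((degIn G T v : ℝ) - 1) ≠ 0 := by
  have h2 : (2:ℝ) ≤ (degIn G T v : ℝ) := by exact_mod_cast hdeg v hv
  linarith

lemma Yp_pos {T : Finset V} (hdeg : ∀ v ∈ T, 2 ≤ degIn G T v) {n : ℕ}
    {p : Fin (n+1) → V} (hp : p ∈ pathF G T n) : 0 < Yp G T n p := by
  apply Finset.prod_pos
  intro k _
  by_cases hcond : 0 < (k:ℕ) ∧ (k:ℕ) < n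
  · rw [if_pos hcond]
    have h2 : (2:ℝ) ≤ (degIn G T (p k) : ℝ) := by
      exact_mod_cast hdeg (p k) (((mem_pathF (G := G)).mp hp).1 k)
    linarith
  · rw [if_neg hcond]; norm_num

lemma ω_nonneg {T : Finset V} (hdeg : ∀ v ∈ T, 2 ≤ degIn G T v) {n : ℕ}
    {p : Fin (n+1) → V} (hp : p ∈ pathF G T n) : 0 ≤ ω G T n p := by
  apply Finset.prod_nonneg
  intro k _
  by_cases hcond : 0 < (k:ℕ) ∧ (k:ℕ) < n
  · rw [if_pos hcond, invd]
    have h2 : (2:ℝ) ≤ (degIn G T (p k) : ℝ) := by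
      exact_mod_cast hdeg (p k) (((mem_pathF (G := G)).mp hp).1 k)
    have h1 : (0:ℝ) ≤ (degIn G T (p k) : ℝ) - 1 := by linarith
    exact inv_nonneg.mpr h1
  · rw [if_neg hcond]; norm_num

lemma ωY {T : Finset V} (hdeg : ∀ v ∈ T, 2 ≤ degIn G T v) {n : ℕ}
    {p : Fin (n+1) → V} (hp : p ∈ pathF G T n) : ω G T n p * Yp G T n p = 1 := by
  rw [ω, Yp, ← Finset.prod_mul_distrib]
  apply Finset.prod_eq_one
  intro k _
  by_cases hcond : 0 < (k:ℕ) ∧ (k:ℕ) < n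
  · rw [if_pos hcond, if_pos hcond, invd]
    exact inv_mul_cancel₀ (deg_ne G hdeg (((mem_pathF (G := G)).mp hp).1 k))
  · rw [if_neg hcond, if_neg hcond]; norm_num

lemma logY {T : Finset V} (hdeg : ∀ v ∈ T, 2 ≤ degIn G T v) {n : ℕ}
    {p : Fin (n+1) → V} (hp : p ∈ pathF G T n) :
    Real.log (Yp G T n p) = ∑ k : Fin (n+1),
      (if 0 < (k:ℕ) ∧ (k:ℕ) < n then Real.log ((degIn G T (p k) : ℝ) - 1) else 0) := by
  rw [Yp, Real.log_prod]
  · apply Finset.sum_congr rfl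
    intro k _
    by_cases hcond : 0 < (k:ℕ) ∧ (k:ℕ) < n
    · rw [if_pos hcond, if_pos hcond]
    · rw [if_neg hcond, if_neg hcond, Real.log_one]
  · intro k _
    by_cases hcond : 0 < (k:ℕ) ∧ (k:ℕ) < n
    · rw [if_pos hcond]
      exact deg_ne G hdeg (((mem_pathF (G := G)).mp hp).1 k)
    · rw [if_neg hcond]; norm_num

lemma sum_dirE_snd (T : Finset V) (φ : V → ℝ) :
    ∑ z ∈ dirE G T, φ z.2 = ∑ v ∈ T, (degIn G T v : ℝ) * φ v := by
  rw [sum_dirE_swap G T (fun a b => φ b)]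
  rw [sum_dirE G T (fun a b => φ a)]
  apply Finset.sum_congr rfl
  intro a _
  rw [Finset.sum_const, nsmul_eq_mul]
  rfl

theorem core_bound
    (hgirth : ∀ (v : V) (c : G.Walk v v), c.IsCycle → g ≤ c.length) (hg : 4 ≤ g)
    (T : Finset V) (hT : T.Nonempty) (hdeg : ∀ v ∈ T, 2 ≤ degIn G T v) :
    (2 * ((eIn G T).card : ℝ)) / (T.card : ℝ) - 1
      ≤ (Fintype.card V : ℝ) ^ ((2:ℝ)/((g:ℝ)-3)) := by
  obtain ⟨L', hL⟩ : ∃ L', (g-1)/2 = L' + 1 := ⟨(g-1)/2 - 1, by omega⟩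
  have hL'g : L' + 2 ≤ g := by omega
  have h2L : 2 * (L' + 1) + 1 ≤ g := by omega
  -- basic quantities
  have hcardpos : 0 < T.card := Finset.card_pos.mpr hT
  have hnpos : (0:ℝ) < (T.card : ℝ) := by exact_mod_cast hcardpos
  set M : ℝ := ((dirE G T).card : ℝ) with hM
  have hM_hand : (dirE G T).card = 2 * (eIn G T).card := card_dirE_eq_twice G T
  have hM_deg : (dirE G T).card = ∑ a ∈ T, degIn G T a := card_dirE G T
  have hM2n : 2 * T.card ≤ (dirE G T).card := by
    rw [hM_deg]
    calc 2 * T.card = ∑ _a ∈ T, 2 := by rw [Finset.sum_const, smul_eq_mul, mul_comm]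
      _ ≤ ∑ a ∈ T, degIn G T a := Finset.sum_le_sum hdeg
  have hMpos : (0:ℝ) < M := by
    rw [hM]
    have : 0 < (dirE G T).card := by omega
    exact_mod_cast this
  set a : ℝ := M / (T.card : ℝ) with ha
  have ha2 : 2 ≤ a := by
    rw [ha, le_div_iff₀ hnpos]
    have : ((2 * T.card : ℕ) : ℝ) ≤ ((dirE G T).card : ℝ) := by exact_mod_cast hM2n
    push_cast at this
    linarith
  -- Jensen
  have hMsum : M = ∑ v ∈ T, ((degIn G T v : ℕ) : ℝ) := by
    rw [hM, hM_deg]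
    push_cast
    rfl
  have hjensen : M * Real.log (a - 1) ≤ ∑ v ∈ T, (degIn G T v : ℝ) * Real.log ((degIn G T v : ℝ) - 1) := by
    have := sum_mul_log_ge T hT (fun v => (degIn G T v : ℝ))
      (fun v hv => by show (2:ℝ) ≤ (degIn G T v : ℝ); exact_mod_cast hdeg v hv)
    rw [← hMsum] at this
    rw [ha]
    exact this
  -- path count lower bound
  set P := pathF G T (L'+1) with hP
  have hmass : ∑ p ∈ P, ω G T (L'+1) p = M := mass G hgirth T hdeg L' hL'g
  set SP : ℝ := ∑ v ∈ T, (degIn G T v : ℝ) * Real.log ((degIn G T v : ℝ) - 1) with hSP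
  have hlogsum : ∑ p ∈ P, ω G T (L'+1) p * Real.log (Yp G T (L'+1) p) = (L' : ℝ) * SP := by
    have hper : ∀ p ∈ P, ω G T (L'+1) p * Real.log (Yp G T (L'+1) p)
        = ∑ k : Fin (L'+2), (if 0 < (k:ℕ) ∧ (k:ℕ) < L'+1 then
            ω G T (L'+1) p * Real.log ((degIn G T (p k) : ℝ) - 1) else 0) := by
      intro p hp
      rw [logY G hdeg hp, Finset.mul_sum]
      apply Finset.sum_congr rfl
      intro k _
      by_cases hcond : 0 < (k:ℕ) ∧ (k:ℕ) < L'+1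
      · rw [if_pos hcond, if_pos hcond]
      · rw [if_neg hcond, if_neg hcond, mul_zero]
    rw [Finset.sum_congr rfl hper, Finset.sum_comm]
    have hinner : ∀ k : Fin (L'+2), ∑ p ∈ P, (if 0 < (k:ℕ) ∧ (k:ℕ) < L'+1 then
        ω G T (L'+1) p * Real.log ((degIn G T (p k) : ℝ) - 1) else 0)
        = (if 0 < (k:ℕ) ∧ (k:ℕ) < L'+1 then SP else 0) := by
      intro k
      by_cases hcond : 0 < (k:ℕ) ∧ (k:ℕ) < L'+1
      · rw [if_pos hcond]
        rw [Finset.sum_congr rfl (fun p _ => if_pos hcond)]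
        have hmarg := marg G hgirth T hdeg (k:ℕ) L' hcond.1 (by omega) hL'g
          (fun v => Real.log ((degIn G T v : ℝ) - 1))
        have heq : ∀ p ∈ P, ω G T (L'+1) p * Real.log ((degIn G T (p k) : ℝ) - 1)
            = ω G T (L'+1) p * Real.log ((degIn G T (p ⟨(k:ℕ), by omega⟩) : ℝ) - 1) := by
          intro p _
          have hk : (⟨(k:ℕ), by omega⟩ : Fin (L'+2)) = k := Fin.ext rfl
          rw [hk]
        rw [Finset.sum_congr rfl heq, hmarg,
          sum_dirE_snd G T (fun v => Real.log ((degIn G T v : ℝ) - 1))]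
      · rw [if_neg hcond]
        rw [Finset.sum_congr rfl (fun p _ => if_neg hcond), Finset.sum_const, smul_zero]
    rw [Finset.sum_congr rfl (fun k _ => hinner k)]
    rw [← Finset.sum_filter, Finset.sum_const, nsmul_eq_mul]
    congr 1
    have himg : (Finset.univ.filter (fun k : Fin (L'+2) => 0 < (k:ℕ) ∧ (k:ℕ) < L'+1)).image
          Fin.val = Finset.Ioo 0 (L'+1) := by
      ext m
      simp only [Finset.mem_image, Finset.mem_filter, Finset.mem_univ, true_and, Finset.mem_Ioo]
      constructor
      · rintro ⟨k, hk, rfl⟩; exact hk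
      · intro hm; exact ⟨⟨m, by omega⟩, by simpa using hm, rfl⟩
    have hcount : (Finset.univ.filter (fun k : Fin (L'+2) => 0 < (k:ℕ) ∧ (k:ℕ) < L'+1)).card
        = L' := by
      rw [← Finset.card_image_of_injective _ Fin.val_injective, himg, Nat.card_Ioo]
      omega
    rw [hcount]

  have hYpos : ∀ p ∈ P, 0 < Yp G T (L'+1) p := fun p hp => Yp_pos G hdeg hp
  have hωpos : ∀ p ∈ P, 0 ≤ ω G T (L'+1) p := fun p hp => ω_nonneg G hdeg hp
  set c : ℝ := (L' : ℝ) * Real.log (a - 1) with hc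
  have hMC : M * c ≤ ∑ p ∈ P, ω G T (L'+1) p * Real.log (Yp G T (L'+1) p) := by
    rw [hlogsum, hc]
    calc M * ((L':ℝ) * Real.log (a-1)) = (L':ℝ) * (M * Real.log (a-1)) := by ring
      _ ≤ (L':ℝ) * SP := by
          apply mul_le_mul_of_nonneg_left hjensen (by positivity)
  have hexp := sum_exp_ge P (ω G T (L'+1)) (Yp G T (L'+1)) hωpos hYpos M c hmass hMC
  have hsumY : ∑ p ∈ P, ω G T (L'+1) p * Yp G T (L'+1) p = (P.card : ℝ) := by
    rw [Finset.sum_congr rfl (fun p hp => ωY G hdeg hp)]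
    rw [Finset.sum_const, nsmul_eq_mul, mul_one]
  rw [hsumY] at hexp
  have ha1 : (0:ℝ) < a - 1 := by linarith
  have hexpc : Real.exp c = (a-1)^(L' : ℕ) := by
    rw [hc, Real.exp_nat_mul, Real.exp_log ha1]
  rw [hexpc] at hexp
  have hcard := pathF_card_le G hgirth (T := T) (n := L'+1) h2L
  have hPn : (P.card : ℝ) ≤ (T.card : ℝ) * (T.card : ℝ) := by exact_mod_cast hcard
  have hMa : M = (T.card : ℝ) * a := by rw [ha]; field_simp
  have hchain : a * (a-1)^(L' : ℕ) ≤ (T.card : ℝ) := by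
    have h1 : (T.card:ℝ) * (a * (a-1)^(L':ℕ)) ≤ (T.card:ℝ) * (T.card:ℝ) := by
      calc (T.card:ℝ) * (a * (a-1)^(L':ℕ)) = M * (a-1)^(L':ℕ) := by rw [hMa]; ring
        _ ≤ (P.card : ℝ) := hexp
        _ ≤ _ := hPn
    exact le_of_mul_le_mul_left h1 hnpos
  have hTN : (T.card : ℝ) ≤ (Fintype.card V : ℝ) := by
    exact_mod_cast Finset.card_le_univ T
  have hpow : (a-1)^((L':ℕ)+1) ≤ (Fintype.card V : ℝ) := by
    calc (a-1)^((L':ℕ)+1) = (a-1)^(L':ℕ) * (a-1) := by ring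
      _ ≤ (a-1)^(L':ℕ) * a := by
          apply mul_le_mul_of_nonneg_left (by linarith) (by positivity)
      _ = a * (a-1)^(L':ℕ) := by ring
      _ ≤ (T.card : ℝ) := hchain
      _ ≤ _ := hTN
  have hN1 : (1:ℝ) ≤ (Fintype.card V : ℝ) := by
    have hpos : 0 < Fintype.card V := by
      obtain ⟨v, _⟩ := hT
      exact Fintype.card_pos_iff.mpr ⟨v⟩
    exact_mod_cast hpos
  have hx1 : (1:ℝ) ≤ a - 1 := by linarith
  have hstep1 : a - 1 ≤ (Fintype.card V : ℝ) ^ ((1:ℝ)/((L'+1 : ℕ):ℝ)) := by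
    have h1 : ((a-1) ^ ((L'+1):ℕ) : ℝ) ^ ((1:ℝ)/(((L'+1):ℕ):ℝ))
        ≤ (Fintype.card V : ℝ) ^ ((1:ℝ)/(((L'+1):ℕ):ℝ)) :=
      Real.rpow_le_rpow (by positivity) hpow (by positivity)
    rw [← Real.rpow_natCast (a-1) (L'+1), ← Real.rpow_mul (by linarith : (0:ℝ) ≤ a - 1)] at h1
    have he1 : (((L'+1):ℕ):ℝ) * ((1:ℝ)/(((L'+1):ℕ):ℝ)) = 1 := by
      have : (((L'+1):ℕ):ℝ) ≠ 0 := by positivity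
      field_simp
    rw [he1, Real.rpow_one] at h1
    exact h1
  have hstep2 : (Fintype.card V : ℝ) ^ ((1:ℝ)/(((L'+1):ℕ):ℝ))
      ≤ (Fintype.card V : ℝ) ^ ((2:ℝ)/((g:ℝ)-3)) := by
    apply Real.rpow_le_rpow_of_exponent_le hN1
    have hg3 : (0:ℝ) < (g:ℝ) - 3 := by
      have h4 : (4:ℝ) ≤ (g:ℝ) := by exact_mod_cast hg
      linarith
    rw [div_le_div_iff₀ (by positivity) hg3]
    have hnat : g - 2 ≤ 2 * (L' + 1) := by omega
    have hcast : ((g:ℝ) - 2) ≤ 2 * ((L'+1 : ℕ) : ℝ) := by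
      have h1 : ((g - 2 : ℕ) : ℝ) ≤ ((2 * (L'+1) : ℕ) : ℝ) := by exact_mod_cast hnat
      have h2 : ((g - 2 : ℕ) : ℝ) = (g:ℝ) - 2 := by
        have : 2 ≤ g := by omega
        push_cast [Nat.cast_sub this]
        ring
      rw [h2] at h1
      push_cast at h1
      push_cast
      linarith
    push_cast
    push_cast at hcast
    linarith
  have hfinal : a - 1 ≤ (Fintype.card V : ℝ) ^ ((2:ℝ)/((g:ℝ)-3)) := le_trans hstep1 hstep2
  have hfin2 : (2 * ((eIn G T).card : ℝ)) / (T.card : ℝ) = a := by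
    rw [ha, hM, hM_hand]
    push_cast
    ring
  rw [hfin2]
  linarith

end Core


section Cycles

lemma mk_cycle {G' : SimpleGraph V} {k : ℕ} (hk2 : 2 ≤ k) (f : Fin (k+1) → V)
    (hadj : ∀ i : Fin k, G'.Adj (f i.castSucc) (f i.succ))
    (hcl : G'.Adj (f (Fin.last k)) (f 0))
    (hinj : Function.Injective f) :
    ∃ (a : V) (c : G'.Walk a a), c.IsCycle ∧ c.length = k + 1
      ∧ ∀ x ∈ c.support, ∃ i, f i = x := by
  have hpath : (walkF G' k f hadj).IsPath := walkF_isPath G' k f hadj hinj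
  set p : G'.Path (f 0) (f (Fin.last k)) := ⟨walkF G' k f hadj, hpath⟩ with hp
  have he : s(f (Fin.last k), f 0) ∉ (p : G'.Walk (f 0) (f (Fin.last k))).edges := by
    rw [hp]
    simp only [walkF_edges]
    intro hmem
    rw [List.mem_ofFn] at hmem
    obtain ⟨i, hi⟩ := hmem
    rw [Sym2.eq_iff] at hi
    rcases hi with ⟨h1, h2⟩ | ⟨h1, h2⟩
    · have : i.castSucc = Fin.last k := hinj h1
      exact absurd this (Fin.castSucc_lt_last i).ne
    · have hi0 : i.castSucc = (0 : Fin (k+1)) := hinj h1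
      have hi1 : i.succ = Fin.last k := hinj h2
      have hv0 : (i : ℕ) = 0 := by
        have := congrArg Fin.val hi0
        simpa using this
      have hv1 : (i : ℕ) + 1 = k := by
        have := congrArg Fin.val hi1
        simpa using this
      omega
  refine ⟨f (Fin.last k), SimpleGraph.Walk.cons hcl (p : G'.Walk (f 0) (f (Fin.last k))),
    SimpleGraph.Path.cons_isCycle p hcl he, ?_, ?_⟩
  · rw [SimpleGraph.Walk.length_cons, hp]
    simp only [walkF_length]
  · intro x hx
    rw [SimpleGraph.Walk.support_cons] at hx
    rcases List.mem_cons.mp hx with h | h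
    · exact ⟨Fin.last k, h.symm⟩
    · rw [hp] at h
      simp only [walkF_support] at h
      rw [List.mem_ofFn] at h
      obtain ⟨i, hi⟩ := h
      exact ⟨i, hi⟩

lemma exists_cycle_in (T : Finset V) (hdeg : ∀ v ∈ T, 2 ≤ degIn G T v) (hT : T.Nonempty) :
    ∃ (a : V) (c : G.Walk a a), c.IsCycle ∧ ∀ x ∈ c.support, x ∈ T := by
  have hstep : ∀ j : ℕ, (pathF G T (j+1)).Nonempty →
      (∃ (a : V) (c : G.Walk a a), c.IsCycle ∧ ∀ x ∈ c.support, x ∈ T)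
        ∨ (pathF G T (j+2)).Nonempty := by
    intro j hne
    obtain ⟨q, hq⟩ := hne
    obtain ⟨hmem, hadj, hinj⟩ := (mem_pathF (G := G)).mp hq
    have herase : ((nbrIn G T (q 0)).erase (q 1)).Nonempty := by
      rw [← Finset.card_pos, Finset.card_erase_of_mem (snd_mem_nbr G hq)]
      have h2 := hdeg (q 0) (hmem 0)
      unfold degIn at h2
      omega
    obtain ⟨w, hw⟩ := herase
    obtain ⟨hwq1, hwnbr⟩ := Finset.mem_erase.mp hw
    rw [mem_nbrIn] at hwnbr
    obtain ⟨hwT, hadj0⟩ := hwnbr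
    by_cases hwr : ∃ i, q i = w
    · left
      obtain ⟨i, hqi⟩ := hwr
      have hi0 : (i:ℕ) ≠ 0 := by
        intro h0
        have hieq : i = 0 := Fin.ext (by simpa using h0)
        subst hieq
        exact hadj0.ne hqi
      have hi1 : (i:ℕ) ≠ 1 := by
        intro h1
        have hieq : i = 1 := Fin.ext (by simpa using h1)
        subst hieq
        exact hwq1 hqi.symm
      have hm2 : 2 ≤ (i:ℕ) := by omega
      have hmlt : (i : ℕ) < j + 2 := i.isLt
      set f : Fin ((i:ℕ)+1) → V := fun s => q (Fin.castLE (by omega : (i:ℕ)+1 ≤ j+2) s) with hf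
      have hadjf : ∀ s : Fin (i:ℕ), G.Adj (f s.castSucc) (f s.succ) := by
        intro s
        have h := hadj ⟨(s : ℕ), by omega⟩
        rw [hf]
        convert h using 2 <;> (apply Fin.ext; simp)
      have hclf : G.Adj (f (Fin.last (i:ℕ))) (f 0) := by
        have h : G.Adj (q i) (q 0) := by rw [hqi]; exact hadj0.symm
        rw [hf]
        convert h using 2 <;> (apply Fin.ext; simp)
      have hinjf : Function.Injective f := by
        rw [hf]; exact hinj.comp (Fin.castLE_injective _)
      obtain ⟨a, c, hcyc, hlen, hsup⟩ := mk_cycle (G' := G) hm2 f hadjf hclf hinjf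
      refine ⟨a, c, hcyc, ?_⟩
      intro x hx
      obtain ⟨sidx, hsidx⟩ := hsup x hx
      rw [← hsidx, hf]
      exact hmem _
    · right
      push_neg at hwr
      refine ⟨Fin.cons w q, ?_⟩
      rw [mem_pathF]
      refine ⟨?_, ?_, ?_⟩
      · intro k
        induction k using Fin.cases with
        | zero => simpa using hwT
        | succ i => simpa using hmem i
      · intro k
        induction k using Fin.cases with
        | zero =>
          have e1 : ((0 : Fin (j+2)).castSucc) = (0 : Fin (j+3)) := by apply Fin.ext; simp
          rw [e1, Fin.cons_zero, Fin.cons_succ]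
          exact hadj0.symm
        | succ i =>
          rw [← Fin.succ_castSucc, Fin.cons_succ, Fin.cons_succ]
          exact hadj i
      · intro x y hxy
        induction x using Fin.cases with
        | zero =>
          induction y using Fin.cases with
          | zero => rfl
          | succ i =>
            rw [Fin.cons_zero, Fin.cons_succ] at hxy
            exact absurd (hwr i) (by rw [hxy]; simp)
        | succ i =>
          induction y using Fin.cases with
          | zero =>
            rw [Fin.cons_zero, Fin.cons_succ] at hxy
            exact absurd (hwr i) (by rw [← hxy]; simp)
          | succ i' =>
            rw [Fin.cons_succ, Fin.cons_succ] at hxy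
            rw [hinj hxy]
  have hiter : ∀ j : ℕ, (∃ (a : V) (c : G.Walk a a), c.IsCycle ∧ ∀ x ∈ c.support, x ∈ T)
      ∨ (pathF G T (j+1)).Nonempty := by
    intro j
    induction j with
    | zero =>
      right
      obtain ⟨v, hv⟩ := hT
      have h2 : 2 ≤ degIn G T v := hdeg v hv
      have hnbr : (nbrIn G T v).Nonempty := by
        rw [← Finset.card_pos]
        unfold degIn at h2
        omega
      obtain ⟨w, hw⟩ := hnbr
      rw [mem_nbrIn] at hw
      refine ⟨fun k : Fin 2 => if k = 0 then v else w, ?_⟩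
      rw [mem_pathF]
      refine ⟨?_, ?_, ?_⟩
      · intro k; fin_cases k <;> simp [hv, hw.1]
      · intro k
        fin_cases k
        simpa using hw.2
      · intro x y hxy
        fin_cases x <;> fin_cases y <;> simp_all
    | succ j ih =>
      rcases ih with h | h
      · left; exact h
      · exact hstep j h
  rcases hiter T.card with h | h
  · exact h
  · exfalso
    obtain ⟨p, hp⟩ := h
    obtain ⟨hmem, _, hinj⟩ := (mem_pathF (G := G)).mp hp
    have h1 : (Finset.univ.image p).card = T.card + 2 := by
      rw [Finset.card_image_of_injective _ hinj, Finset.card_univ, Fintype.card_fin]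
    have h2 : (Finset.univ.image p) ⊆ T := by
      intro x hx
      obtain ⟨k, _, rfl⟩ := Finset.mem_image.mp hx
      exact hmem k
    have := Finset.card_le_card h2
    omega

lemma cycle_len_le {a : V} {S : Finset V} {c : G.Walk a a} (hc : c.IsCycle)
    (hsup : ∀ x ∈ c.support, x ∈ S) : c.length ≤ S.card := by
  have htail : c.support.tail.Nodup := ((SimpleGraph.Walk.isCycle_def c).mp hc).2.2
  have hlensupp : c.support.length = c.length + 1 := SimpleGraph.Walk.length_support c
  have hlen : c.support.tail.length = c.length := by
    rw [List.length_tail, hlensupp]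
    omega
  calc c.length = c.support.tail.toFinset.card := by
        rw [List.toFinset_card_of_nodup htail, hlen]
    _ ≤ S.card := by
        apply Finset.card_le_card
        intro x hx
        exact hsup x (List.mem_of_mem_tail (List.mem_toFinset.mp hx))

end Cycles

section Core2

lemma two_le_card_of_edge {S : Finset V} (h : 1 ≤ (eIn G S).card) : 2 ≤ S.card := by
  obtain ⟨e, he⟩ := Finset.card_pos.mp h
  induction e using Sym2.ind with
  | _ a b =>
    rw [mem_eIn_mk] at he
    exact Finset.one_lt_card.mpr ⟨a, he.2.1, b, he.2.2, he.1.ne⟩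

lemma eIn_erase_eq (S : Finset V) (v : V) :
    eIn G (S.erase v) = (eIn G S).filter (fun e => ¬ v ∈ e) := by
  ext e
  induction e using Sym2.ind with
  | _ a b =>
    rw [Finset.mem_filter, mem_eIn_mk, mem_eIn_mk]
    simp only [Finset.mem_erase, Sym2.mem_iff]
    constructor
    · rintro ⟨hab, ⟨ha1, ha2⟩, hb1, hb2⟩
      exact ⟨⟨hab, ha2, hb2⟩, by push_neg; exact ⟨fun h => ha1 h.symm, fun h => hb1 h.symm⟩⟩
    · rintro ⟨⟨hab, ha, hb⟩, hnot⟩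
      push_neg at hnot
      exact ⟨hab, ⟨fun h => hnot.1 h.symm, ha⟩, fun h => hnot.2 h.symm, hb⟩

lemma card_eIn_erase {S : Finset V} {v : V} (hv : v ∈ S) :
    (eIn G S).card = degIn G S v + (eIn G (S.erase v)).card := by
  rw [eIn_erase_eq, ← card_eIn_filter_mem G hv]
  exact (Finset.card_filter_add_card_filter_not (fun e => v ∈ e)).symm

lemma two_core (S : Finset V) : S.card ≤ (eIn G S).card → 1 ≤ (eIn G S).card →
    ∃ T, T ⊆ S ∧ T.Nonempty ∧ (∀ v ∈ T, 2 ≤ degIn G T v) ∧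
      (eIn G S).card * T.card ≤ (eIn G T).card * S.card := by
  induction S using Finset.strongInductionOn with
  | _ S ih =>
    intro h1 h2
    have hcardS : 2 ≤ S.card := two_le_card_of_edge G h2
    by_cases hmin : ∃ v ∈ S, degIn G S v ≤ 1
    · obtain ⟨v, hvS, hdv⟩ := hmin
      have hsub : S.erase v ⊂ S := Finset.erase_ssubset hvS
      have hcard' : (S.erase v).card = S.card - 1 := Finset.card_erase_of_mem hvS
      have hE : (eIn G S).card = degIn G S v + (eIn G (S.erase v)).card := card_eIn_erase G hvS
      have hS'1 : (S.erase v).card ≤ (eIn G (S.erase v)).card := by omega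
      have hS'2 : 1 ≤ (eIn G (S.erase v)).card := by omega
      obtain ⟨T, hTsub, hTne, hTdeg, hTdens⟩ := ih (S.erase v) hsub hS'1 hS'2
      refine ⟨T, hTsub.trans (Finset.erase_subset _ _), hTne, hTdeg, ?_⟩
      have hkey : (eIn G S).card * (S.erase v).card ≤ (eIn G (S.erase v)).card * S.card := by
        have e1 : S.card = (S.erase v).card + 1 := by omega
        rw [hE, e1]
        nlinarith [hS'1, hdv]
      have hS'pos : 1 ≤ (S.erase v).card := by omega
      have hfin : (eIn G S).card * T.card * (S.erase v).card
          ≤ (eIn G T).card * S.card * (S.erase v).card := by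
        calc (eIn G S).card * T.card * (S.erase v).card
            = ((eIn G S).card * (S.erase v).card) * T.card := by ring
          _ ≤ ((eIn G (S.erase v)).card * S.card) * T.card := Nat.mul_le_mul_right _ hkey
          _ = ((eIn G (S.erase v)).card * T.card) * S.card := by ring
          _ ≤ ((eIn G T).card * (S.erase v).card) * S.card := Nat.mul_le_mul_right _ hTdens
          _ = (eIn G T).card * S.card * (S.erase v).card := by ring
      exact Nat.le_of_mul_le_mul_right hfin (by omega)
    · push_neg at hmin
      refine ⟨S, Finset.Subset.refl S, Finset.card_pos.mp (by omega), fun v hv => hmin v hv, Nat.le_refl _⟩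

end Core2

end Graphs
end GB

/-- Girth bound: if `G` is a graph on `N` vertices whose girth is `g > 3` (there is a
cycle of length `g` and every cycle has length at least `g`), then
`κ(G) = min_{S : E(S) ≠ ∅} (|S|−1)/|E(S)| ≥ (2/(1+N^{2/(g−3)}))·(1 − 1/g)`. -/
theorem kappa_ge_of_girth
    {V : Type*} [Fintype V] [DecidableEq V]
    (G : SimpleGraph V) [DecidableRel G.Adj]
    (g : ℕ) (hg : 3 < g)
    (hgirth : ∀ (v : V) (c : G.Walk v v), c.IsCycle → g ≤ c.length)
    (hcyc : ∃ (v : V) (c : G.Walk v v), c.IsCycle ∧ c.length = g) :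
    ∀ S : Finset V,
      (G.edgeFinset.filter (fun e => ∀ v ∈ e, v ∈ S)).Nonempty →
      (2 / (1 + (Fintype.card V : ℝ) ^ ((2 : ℝ) / ((g : ℝ) - 3)))) * (1 - 1 / (g : ℝ))
        ≤ ((S.card : ℝ) - 1) / ((G.edgeFinset.filter (fun e => ∀ v ∈ e, v ∈ S)).card) := by
  intro S hSne
  have hg4 : 4 ≤ g := hg
  have hfe : (G.edgeFinset.filter (fun e => ∀ v ∈ e, v ∈ S)) = GB.eIn G S :=
    Finset.filter_congr_decidable _ _ _
  rw [hfe] at hSne ⊢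
  have hm1 : 1 ≤ (GB.eIn G S).card := Finset.card_pos.mpr hSne
  have hn2 : 2 ≤ S.card := GB.two_le_card_of_edge G hm1
  have hN1 : (1:ℝ) ≤ (Fintype.card V : ℝ) := by
    obtain ⟨v, c, _⟩ := hcyc
    have hpos : 0 < Fintype.card V := Fintype.card_pos_iff.mpr ⟨v⟩
    exact_mod_cast hpos
  have hgR : (4:ℝ) ≤ (g:ℝ) := by exact_mod_cast hg4
  have hg3 : (0:ℝ) < (g:ℝ) - 3 := by linarith
  set t : ℝ := (Fintype.card V : ℝ) ^ ((2:ℝ)/((g:ℝ)-3)) with ht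
  have ht1 : (1:ℝ) ≤ t := Real.one_le_rpow hN1 (by positivity)
  have hmpos : (0:ℝ) < ((GB.eIn G S).card : ℝ) := by exact_mod_cast hm1
  have hnpos : (0:ℝ) < (S.card : ℝ) := by
    have : (0:ℕ) < S.card := by omega
    exact_mod_cast this
  have h1t : (0:ℝ) < 1 + t := by linarith
  by_cases hcase : (GB.eIn G S).card ≤ S.card - 1
  · have hmn : ((GB.eIn G S).card : ℝ) ≤ (S.card : ℝ) - 1 := by
      have h1 : ((GB.eIn G S).card : ℝ) ≤ ((S.card - 1 : ℕ) : ℝ) := by exact_mod_cast hcase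
      have h2 : ((S.card - 1 : ℕ) : ℝ) = (S.card : ℝ) - 1 := by
        have hsc : 1 ≤ S.card := by omega
        push_cast [Nat.cast_sub hsc]
        ring
      rw [h2] at h1
      exact h1
    have hr1 : (1:ℝ) ≤ ((S.card:ℝ)-1)/((GB.eIn G S).card : ℝ) := by
      rw [le_div_iff₀ hmpos, one_mul]
      exact hmn
    have hlhs : (2/(1+t)) * (1 - 1/(g:ℝ)) ≤ 1 := by
      rw [div_mul_eq_mul_div, div_le_one h1t]
      have hfrac : 0 ≤ 1/(g:ℝ) := by positivity
      nlinarith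
    linarith
  · have hmn : S.card ≤ (GB.eIn G S).card := by omega
    obtain ⟨T, hTsub, hTne, hTdeg, hTdens⟩ := GB.two_core G S hmn hm1
    obtain ⟨a, c, hcyc', hsupp⟩ := GB.exists_cycle_in G T hTdeg hTne
    have hglen : g ≤ c.length := hgirth a c hcyc'
    have hsuppS : ∀ x ∈ c.support, x ∈ S := fun x hx => hTsub (hsupp x hx)
    have hlen_le : c.length ≤ S.card := GB.cycle_len_le G hcyc' hsuppS
    have hgn : g ≤ S.card := le_trans hglen hlen_le
    have hcore := GB.core_bound G hgirth hg4 T hTne hTdeg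
    have hTpos : (0:ℝ) < (T.card : ℝ) := by
      have : 0 < T.card := Finset.card_pos.mpr hTne
      exact_mod_cast this
    have hdens : ((GB.eIn G S).card:ℝ)/(S.card:ℝ) ≤ ((GB.eIn G T).card : ℝ)/(T.card:ℝ) := by
      rw [div_le_div_iff₀ hnpos hTpos]
      exact_mod_cast hTdens
    have h2m : 2*((GB.eIn G S).card:ℝ)/(S.card:ℝ) - 1 ≤ t := by
      have h1 : 2*((GB.eIn G S).card:ℝ)/(S.card:ℝ) ≤ 2*((GB.eIn G T).card:ℝ)/(T.card:ℝ) := by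
        rw [mul_div_assoc, mul_div_assoc]
        linarith
      linarith [hcore]
    have h2mn : 2*((GB.eIn G S).card:ℝ) ≤ (S.card:ℝ) * (1 + t) := by
      have h2 : 2*((GB.eIn G S).card:ℝ)/(S.card:ℝ) ≤ 1 + t := by linarith
      rw [div_le_iff₀ hnpos] at h2
      nlinarith
    rw [div_mul_eq_mul_div, div_le_div_iff₀ h1t hmpos]
    have hgSR : (g:ℝ) ≤ (S.card:ℝ) := by exact_mod_cast hgn
    have hgpos : (0:ℝ) < (g:ℝ) := by linarith
    have hng : (1 - 1/(g:ℝ)) * (S.card:ℝ) ≤ (S.card:ℝ) - 1 := by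
      have hq : 1 ≤ (S.card:ℝ)/(g:ℝ) := by
        rw [le_div_iff₀ hgpos, one_mul]
        exact hgSR
      have expand : (1 - 1/(g:ℝ)) * (S.card:ℝ) = (S.card:ℝ) - (S.card:ℝ)/(g:ℝ) := by
        field_simp
      rw [expand]
      linarith
    have hfr : 0 ≤ 1 - 1/(g:ℝ) := by
      have : 1/(g:ℝ) ≤ 1 := by
        rw [div_le_one hgpos]
        linarith
      linarith
    calc 2*(1-1/(g:ℝ)) * ((GB.eIn G S).card:ℝ)
        = (1-1/(g:ℝ)) * (2*((GB.eIn G S).card:ℝ)) := by ring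
      _ ≤ (1-1/(g:ℝ)) * ((S.card:ℝ)*(1+t)) := by
          apply mul_le_mul_of_nonneg_left h2mn hfr
      _ = ((1-1/(g:ℝ))*(S.card:ℝ))*(1+t) := by ring
      _ ≤ ((S.card:ℝ)-1)*(1+t) := by
          apply mul_le_mul_of_nonneg_right hng (le_of_lt h1t)
end

section
/- (Constant-support dual optimum) There exists a minimizer w* of the map w ↦ max_{T∈𝒯(G)} Σ_{e∈T} w_e over probability distributions w on E such that all nonzero entries of w* are equal; consequently min_w max_T Σ_{e∈T} w_e = min over nonempty F ⊆ E of (|V(F)|−c(F))/|F|. -/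
open scoped Classical

/-- The number of connected components of the subgraph `(V(F), F)` determined by a set
of edges `F`. -/
noncomputable def numComponents {V : Type*} (F : Finset (Sym2 V)) : ℕ :=
  Nat.card ((SimpleGraph.fromEdgeSet (F : Set (Sym2 V))).induce
    {v : V | ∃ e ∈ F, v ∈ e}).ConnectedComponent

/-!
Let `ρ(F) = |V| - #components(V, F)` be the rank of `F` in the graphic matroid; it equals
`|V(F)| - c(F)`. A forest contained in `F` has at most `ρ(F)` edges, and every forest in `F`
extends to a spanning tree of `G` meeting `F` in exactly `ρ(F)` edges. Let `F*` minimise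
`ρ(F)/|F|`, with value `r*`. Under the uniform distribution on `F*` a spanning tree `T` weighs
`|T ∩ F*|/|F*| ≤ r*`.

Conversely every probability vector `w` has a spanning tree of weight at least `r*`. Write
`w = w₁ + t·1_S`, where `S = supp w` and `t` is the smallest nonzero weight, so `supp w₁ ⊊ S`.
By induction some tree `T₁` is good for `w₁` and meets `supp w₁` in a maximal forest. Extend that
forest to a tree `T` meeting `S` in a maximal forest. Then `T` agrees with `T₁` on `supp w₁`, so
`w(T) = w₁(T₁) + t·ρ(S) ≥ r*·w₁(E) + t·r*·|S| = r*`.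
-/

open SimpleGraph Finset

namespace SimpleGraph

variable {V : Type*} {G H : SimpleGraph V}

lemma Reachable.eq_of_forall_adj {α : Type*} {f : V → α} (hf : ∀ a b, G.Adj a b → f a = f b)
    {x y : V} (h : G.Reachable x y) : f x = f y := by
  obtain ⟨p⟩ := h
  induction p with
  | nil => rfl
  | cons hadj _ ih => exact (hf _ _ hadj).trans ih

lemma Reachable.eq_of_notMem {S : Set V} (hS : ∀ a b, H.Adj a b → a ∈ S) {a b : V}
    (h : H.Reachable a b) (ha : a ∉ S) : a = b := by
  obtain ⟨p⟩ := h
  cases p with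
  | nil => rfl
  | cons hadj _ => exact absurd (hS _ _ hadj) ha

lemma Walk.support_subset_of_start_mem {S : Set V} (hS : ∀ a b, H.Adj a b → a ∈ S) {a b : V}
    (p : H.Walk a b) (ha : a ∈ S) : ∀ x ∈ p.support, x ∈ S := by
  induction p with
  | nil => simpa using ha
  | cons hadj _ ih => simpa [ha] using ih (hS _ _ hadj.symm)

lemma card_connectedComponent_eq_of_reachable_eq (h : G.Reachable = H.Reachable) :
    Nat.card G.ConnectedComponent = Nat.card H.ConnectedComponent := by
  unfold ConnectedComponent
  rw [h]

lemma card_connectedComponent_le_card [Fintype V] (G : SimpleGraph V) :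
    Nat.card G.ConnectedComponent ≤ Fintype.card V := by
  rw [← Nat.card_eq_fintype_card]
  exact Nat.card_le_card_of_surjective _ fun c => c.exists_rep

lemma card_connectedComponent_bot [Fintype V] :
    Nat.card (⊥ : SimpleGraph V).ConnectedComponent = Fintype.card V := by
  rw [← Nat.card_eq_fintype_card]
  exact (Nat.card_congr (Equiv.ofBijective (⊥ : SimpleGraph V).connectedComponentMk
    ⟨fun x y hxy => reachable_bot.mp (ConnectedComponent.exact hxy), fun c => c.exists_rep⟩)).symm

lemma card_connectedComponent_sup_edge_add_one [Finite V] {u v : V} (h : ¬ G.Reachable u v) :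
    Nat.card (G ⊔ edge u v).ConnectedComponent + 1 = Nat.card G.ConnectedComponent := by
  have : Fintype G.ConnectedComponent := Fintype.ofFinite _
  set cu := G.connectedComponentMk u
  set cv := G.connectedComponentMk v
  have hne : cu ≠ cv := fun h' => h (ConnectedComponent.exact h')
  let φ : {c : G.ConnectedComponent // c ≠ cv} → (G ⊔ edge u v).ConnectedComponent :=
    fun c => c.1.map (Hom.ofLE le_sup_left)
  -- merging the component of `v` into that of `u` is constant along edges of `G ⊔ edge u v`
  let merge : V → G.ConnectedComponent := fun x =>
    if G.connectedComponentMk x = cv then cu else G.connectedComponentMk x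
  have hmerge : ∀ a b, (G ⊔ edge u v).Adj a b → merge a = merge b := by
    rintro a b (hab | hab)
    · simp only [merge, ConnectedComponent.eq.mpr hab.reachable]
    · obtain ⟨⟨rfl, rfl⟩ | ⟨rfl, rfl⟩, -⟩ := (edge_adj _ _ _ _).mp hab <;> simp [merge, cu, cv]
  have hφ : Function.Bijective φ := by
    constructor
    · rintro ⟨c, hc⟩ ⟨d, hd⟩ hcd
      induction c using ConnectedComponent.ind with | h x => ?_
      induction d using ConnectedComponent.ind with | h y => ?_
      simpa [merge, hc, hd] using (ConnectedComponent.exact hcd).eq_of_forall_adj hmerge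
    · intro c
      induction c using ConnectedComponent.ind with | h x => ?_
      by_cases hx : G.connectedComponentMk x = cv
      · refine ⟨⟨cu, hne⟩, ConnectedComponent.sound ?_⟩
        have huv : (G ⊔ edge u v).Reachable u v := Adj.reachable <| Or.inr <|
          (edge_adj _ _ _ _).mpr ⟨Or.inl ⟨rfl, rfl⟩, fun h' => h (h' ▸ Reachable.refl u)⟩
        exact huv.trans ((ConnectedComponent.exact hx).mono le_sup_left).symm
      · exact ⟨⟨_, hx⟩, rfl⟩
  rw [← Nat.card_congr (Equiv.ofBijective φ hφ), Nat.card_eq_fintype_card,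
    Nat.card_eq_fintype_card, Fintype.card_subtype_compl, Fintype.card_subtype_eq]
  have : 0 < Fintype.card G.ConnectedComponent := Fintype.card_pos_iff.mpr ⟨cv⟩
  omega

lemma card_connectedComponent_eq_card_induce_add [Finite V] {S : Set V}
    (hS : ∀ a b, H.Adj a b → a ∈ S) :
    Nat.card H.ConnectedComponent = Nat.card (H.induce S).ConnectedComponent + Nat.card ↥Sᶜ := by
  let g : (H.induce S).ConnectedComponent ⊕ ↥Sᶜ → H.ConnectedComponent :=
    Sum.elim (ConnectedComponent.map (Embedding.induce S).toHom) (fun v => H.connectedComponentMk v)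
  have hg : Function.Bijective g := by
    refine ⟨?_, fun c => ?_⟩
    · rintro (c | v) (d | w) hcd
      · induction c using ConnectedComponent.ind with | h x => ?_
        induction d using ConnectedComponent.ind with | h y => ?_
        obtain ⟨p⟩ := ConnectedComponent.exact hcd
        exact congrArg Sum.inl
          (ConnectedComponent.sound ⟨p.induce S (p.support_subset_of_start_mem hS x.2)⟩)
      · induction c using ConnectedComponent.ind with | h x => ?_
        have := (ConnectedComponent.exact hcd).symm.eq_of_notMem hS w.2
        exact absurd (this ▸ x.2) w.2
      · induction d using ConnectedComponent.ind with | h y => ?_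
        have := (ConnectedComponent.exact hcd).eq_of_notMem hS v.2
        exact absurd (this ▸ y.2) v.2
      · exact congrArg Sum.inr (Subtype.ext ((ConnectedComponent.exact hcd).eq_of_notMem hS v.2))
    · induction c using ConnectedComponent.ind with | h x => ?_
      by_cases hx : x ∈ S
      · exact ⟨Sum.inl ((H.induce S).connectedComponentMk ⟨x, hx⟩), rfl⟩
      · exact ⟨Sum.inr ⟨x, hx⟩, rfl⟩
  rw [← Nat.card_congr (Equiv.ofBijective g hg), Nat.card_sum]

lemma fromEdgeSet_insert_mk [DecidableEq V] (u v : V) (B : Finset (Sym2 V)) :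
    fromEdgeSet ((insert s(u, v) B : Finset (Sym2 V)) : Set (Sym2 V)) =
      fromEdgeSet (B : Set (Sym2 V)) ⊔ edge u v := by
  rw [coe_insert, Set.insert_eq, fromEdgeSet_union, sup_comm, edge]

lemma fromEdgeSet_filter_mem_edgeSet {F : Finset (Sym2 V)}
    (hH : H ≤ fromEdgeSet (F : Set (Sym2 V))) :
    fromEdgeSet ((F.filter (· ∈ H.edgeSet) : Finset (Sym2 V)) : Set (Sym2 V)) = H := by
  ext a b
  have := @hH a b
  simp only [fromEdgeSet_adj, coe_filter, Set.mem_ofPred_eq, mem_edgeSet, mem_coe] at this ⊢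
  exact ⟨fun h => h.1.2, fun h => ⟨⟨(this h).1, h⟩, h.ne⟩⟩

end SimpleGraph

section EdgeRank

variable {V : Type*} [Fintype V]

/-- The rank of `F` in the graphic matroid on `V`. Components are those of the spanning graph
`(V, F)`, isolated vertices included, unlike `numComponents`. -/
noncomputable def edgeRank (F : Finset (Sym2 V)) : ℕ :=
  Fintype.card V - Nat.card (fromEdgeSet (F : Set (Sym2 V))).ConnectedComponent

lemma edgeRank_add_card_connectedComponent (F : Finset (Sym2 V)) :
    edgeRank F + Nat.card (fromEdgeSet (F : Set (Sym2 V))).ConnectedComponent = Fintype.card V :=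
  Nat.sub_add_cancel (card_connectedComponent_le_card _)

lemma edgeRank_mono {F F' : Finset (Sym2 V)} (h : F ⊆ F') : edgeRank F ≤ edgeRank F' :=
  Nat.sub_le_sub_left (ConnectedComponent.card_le_card_of_le (fromEdgeSet_mono (by simpa))) _

variable [DecidableEq V]

lemma edgeRank_add_numComponents (F : Finset (Sym2 V)) :
    edgeRank F + numComponents F = #(univ.filter fun v : V => ∃ e ∈ F, v ∈ e) := by
  have hsplit := card_connectedComponent_eq_card_induce_add (H := fromEdgeSet (F : Set (Sym2 V)))
    (S := {v : V | ∃ e ∈ F, v ∈ e})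
    (fun a b hab => ⟨s(a, b), ((fromEdgeSet_adj _).mp hab).1, Sym2.mem_mk_left a b⟩)
  have hcompl : Nat.card ↥({v : V | ∃ e ∈ F, v ∈ e}ᶜ) +
      #(univ.filter fun v : V => ∃ e ∈ F, v ∈ e) = Fintype.card V := by
    rw [Nat.card_eq_fintype_card, Fintype.card_ofFinset, add_comm]
    exact card_filter_add_card_filter_not (s := univ) _
  have := edgeRank_add_card_connectedComponent F
  rw [numComponents]
  omega

lemma cast_card_sub_numComponents (F : Finset (Sym2 V)) :
    (#(univ.filter fun v : V => ∃ e ∈ F, v ∈ e) : ℝ) - numComponents F = edgeRank F := by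
  rw [← edgeRank_add_numComponents]
  push_cast
  ring

lemma setOf_ratio_eq (E : Finset (Sym2 V)) :
    {r : ℝ | ∃ F : Finset (Sym2 V), F ⊆ E ∧ F.Nonempty ∧
      r = ((#(univ.filter fun v : V => ∃ e ∈ F, v ∈ e) : ℝ) - numComponents F) / #F} =
      ↑((E.powerset.filter Finset.Nonempty).image fun F => (edgeRank F : ℝ) / #F) := by
  ext r
  simp [cast_card_sub_numComponents, eq_comm, and_assoc]

lemma card_eq_edgeRank_of_isAcyclic {B : Finset (Sym2 V)} (hdiag : ∀ e ∈ B, ¬ e.IsDiag)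
    (hB : (fromEdgeSet (B : Set (Sym2 V))).IsAcyclic) : #B = edgeRank B := by
  suffices #B + Nat.card (fromEdgeSet (B : Set (Sym2 V))).ConnectedComponent = Fintype.card V by
    have := edgeRank_add_card_connectedComponent B
    omega
  induction B using Finset.induction_on with
  | empty => simpa using card_connectedComponent_bot (V := V)
  | @insert e B heB ih =>
    induction e with | h u v => ?_
    have huv : u ≠ v := by simpa using hdiag _ (mem_insert_self _ _)
    rw [fromEdgeSet_insert_mk] at hB ⊢
    obtain ⟨hB, hreach⟩ := isAcyclic_sup_fromEdgeSet_iff.mp hB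
    have hnreach : ¬ (fromEdgeSet (B : Set (Sym2 V))).Reachable u v := fun h => by
      simpa [huv, heB] using hreach h
    rw [card_insert_of_notMem heB, ← ih (fun e he => hdiag e (mem_insert_of_mem he)) hB,
      ← card_connectedComponent_sup_edge_add_one hnreach]
    ring

lemma card_filter_mem_edgeSet_le_edgeRank {H : SimpleGraph V} (hH : H.IsAcyclic)
    (F : Finset (Sym2 V)) : #(F.filter (· ∈ H.edgeSet)) ≤ edgeRank F := by
  have hle : fromEdgeSet ((F.filter (· ∈ H.edgeSet) : Finset (Sym2 V)) : Set (Sym2 V)) ≤ H :=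
    H.fromEdgeSet_le.mpr fun e he => (mem_filter.mp he.1).2
  rw [card_eq_edgeRank_of_isAcyclic (fun e he => H.not_isDiag_of_mem_edgeSet (mem_filter.mp he).2)
    (hH.anti hle)]
  exact edgeRank_mono (filter_subset _ _)

lemma exists_isTree_card_filter_mem_edgeSet_eq {G : SimpleGraph V} (hG : G.Connected)
    {F : Finset (Sym2 V)} (hF : (F : Set (Sym2 V)) ⊆ G.edgeSet) {H : SimpleGraph V}
    (hHF : H ≤ fromEdgeSet (F : Set (Sym2 V))) (hH : H.IsAcyclic) :
    ∃ T ≤ G, T.IsTree ∧ H ≤ T ∧ #(F.filter (· ∈ T.edgeSet)) = edgeRank F := by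
  obtain ⟨K, hHK, hKF, hK, hreach⟩ := exists_isAcyclic_reachable_eq_le_of_le_of_isAcyclic hHF hH
  have hFG : fromEdgeSet (F : Set (Sym2 V)) ≤ G := G.fromEdgeSet_le.mpr fun e he => hF he.1
  obtain ⟨T, hKT, hTG, hT⟩ := hG.exists_isTree_le_of_le_of_isAcyclic (hKF.trans hFG) hK
  refine ⟨T, hTG, hT, hHK.trans hKT,
    (card_filter_mem_edgeSet_le_edgeRank hT.isAcyclic F).antisymm ?_⟩
  have hrank : edgeRank F = #(F.filter (· ∈ K.edgeSet)) := by
    rw [card_eq_edgeRank_of_isAcyclic (fun e he => K.not_isDiag_of_mem_edgeSet (mem_filter.mp he).2)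
      (by rwa [fromEdgeSet_filter_mem_edgeSet hKF]), edgeRank, edgeRank,
      fromEdgeSet_filter_mem_edgeSet hKF, card_connectedComponent_eq_of_reachable_eq hreach]
  rw [hrank]
  exact card_le_card (monotone_filter_right _ fun e _ he => edgeSet_mono hKT he)

lemma filter_mem_edgeSet_eq_of_inf_le {T₁ T : SimpleGraph V} (hT : T.IsAcyclic)
    {S : Finset (Sym2 V)} (hT₁ : #(S.filter (· ∈ T₁.edgeSet)) = edgeRank S)
    (hle : T₁ ⊓ fromEdgeSet (S : Set (Sym2 V)) ≤ T) :
    S.filter (· ∈ T.edgeSet) = S.filter (· ∈ T₁.edgeSet) := by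
  refine (eq_of_subset_of_card_le (fun e he => ?_) ?_).symm
  · obtain ⟨heS, heT₁⟩ := mem_filter.mp he
    refine mem_filter.mpr ⟨heS, edgeSet_mono hle ?_⟩
    rw [edgeSet_inf, edgeSet_fromEdgeSet]
    exact ⟨heT₁, heS, T₁.not_isDiag_of_mem_edgeSet heT₁⟩
  · exact hT₁ ▸ card_filter_mem_edgeSet_le_edgeRank hT S

end EdgeRank

section Greedy

variable {V : Type*} [Fintype V] [DecidableEq V] {G : SimpleGraph V} [DecidableRel G.Adj] {r : ℝ}

lemma exists_isTree_add_indicator (hG : G.Connected)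
    (hr : ∀ F ⊆ G.edgeFinset, F.Nonempty → r * #F ≤ edgeRank F) {S : Finset (Sym2 V)}
    (hSE : S ⊆ G.edgeFinset) (hS : S.Nonempty) {t : ℝ} (ht : 0 ≤ t) {w : Sym2 V → ℝ}
    (hwS : G.edgeFinset.filter (w · ≠ 0) ⊆ S) {T₁ : SimpleGraph V} (hT₁ : T₁.IsTree)
    (hcard₁ : #((G.edgeFinset.filter (w · ≠ 0)).filter (· ∈ T₁.edgeSet)) =
      edgeRank (G.edgeFinset.filter (w · ≠ 0)))
    (hsum₁ : r * ∑ e ∈ G.edgeFinset, w e ≤ ∑ e ∈ G.edgeFinset.filter (· ∈ T₁.edgeSet), w e) :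
    ∃ T ≤ G, T.IsTree ∧ #(S.filter (· ∈ T.edgeSet)) = edgeRank S ∧
      r * ∑ e ∈ G.edgeFinset, (w e + if e ∈ S then t else 0) ≤
        ∑ e ∈ G.edgeFinset.filter (· ∈ T.edgeSet), (w e + if e ∈ S then t else 0) := by
  set E := G.edgeFinset
  set S₁ := E.filter (w · ≠ 0)
  obtain ⟨T, hTG, hT, hle, hcard⟩ := exists_isTree_card_filter_mem_edgeSet_eq hG
    (fun e he => mem_edgeFinset.mp (hSE he))
    (inf_le_right.trans (fromEdgeSet_mono (coe_subset.mpr hwS))) (hT₁.isAcyclic.anti inf_le_left)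
  refine ⟨T, hTG, hT, hcard, ?_⟩
  -- `T` meets the support of `w` in the same edges as `T₁`, so it is as heavy as `T₁` for `w`
  have hsum : ∑ e ∈ E.filter (· ∈ T.edgeSet), w e = ∑ e ∈ E.filter (· ∈ T₁.edgeSet), w e := by
    rw [← sum_filter_ne_zero, filter_comm, filter_mem_edgeSet_eq_of_inf_le hT.isAcyclic hcard₁ hle,
      ← filter_comm, sum_filter_ne_zero]
  have hET : E.filter (· ∈ T.edgeSet) ∩ S = S.filter (· ∈ T.edgeSet) := by
    ext e
    simp only [mem_inter, mem_filter]
    exact ⟨fun h => ⟨h.2, h.1.2⟩, fun h => ⟨⟨hSE h.1, h.2⟩, h.1⟩⟩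
  simp only [sum_add_distrib, sum_ite_mem, sum_const, nsmul_eq_mul, inter_eq_right.mpr hSE, hET,
    hsum]
  have hrS : r * #S ≤ #(S.filter (· ∈ T.edgeSet)) := hcard ▸ hr S hSE hS
  nlinarith [mul_le_mul_of_nonneg_left hrS ht]

/-- The first conjunct, that the tree meets the support of `w` in a maximal forest, is what lets
the induction on the size of the support go through. -/
lemma exists_isTree_card_support_eq_and_mul_sum_le (hG : G.Connected)
    (hr : ∀ F ⊆ G.edgeFinset, F.Nonempty → r * #F ≤ edgeRank F) (w : Sym2 V → ℝ)
    (hw : ∀ e, 0 ≤ w e) :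
    ∃ T ≤ G, T.IsTree ∧
      #((G.edgeFinset.filter (w · ≠ 0)).filter (· ∈ T.edgeSet)) =
        edgeRank (G.edgeFinset.filter (w · ≠ 0)) ∧
      r * ∑ e ∈ G.edgeFinset, w e ≤ ∑ e ∈ G.edgeFinset.filter (· ∈ T.edgeSet), w e := by
  set E := G.edgeFinset
  induction hn : #(E.filter (w · ≠ 0)) using Nat.strong_induction_on generalizing w with
  | _ n ih =>
  set S := E.filter (w · ≠ 0)
  rcases S.eq_empty_or_nonempty with hS | hS
  · obtain ⟨T, hTG, hT, -, hcard⟩ := exists_isTree_card_filter_mem_edgeSet_eq hG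
      (fun e he => mem_edgeFinset.mp (filter_subset (w · ≠ 0) E he)) bot_le isAcyclic_bot
    refine ⟨T, hTG, hT, hcard, ?_⟩
    rw [← sum_filter_ne_zero, show E.filter (w · ≠ 0) = S from rfl, hS, sum_empty, mul_zero]
    exact sum_nonneg fun e _ => hw e
  -- peel off the smallest nonzero weight `t = w e₀`: `w = w₁ + t • 1_S` with `supp w₁ ⊊ S`
  obtain ⟨e₀, he₀, hmin⟩ := S.exists_min_image w hS
  set w₁ : Sym2 V → ℝ := fun e => w e - if e ∈ S then w e₀ else 0
  have hw₁ : ∀ e, 0 ≤ w₁ e := fun e => by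
    by_cases he : e ∈ S <;> simp [w₁, he, hmin, hw]
  have hS₁ : E.filter (w₁ · ≠ 0) ⊆ S.erase e₀ := fun e he => by
    have hne : w₁ e ≠ 0 := (mem_filter.mp he).2
    by_cases heS : e ∈ S
    · exact mem_erase.mpr ⟨fun h => hne (by simp [w₁, h, he₀]), heS⟩
    · have hwe : w e = 0 := by_contra fun h => heS (mem_filter.mpr ⟨(mem_filter.mp he).1, h⟩)
      exact absurd (by simp [w₁, heS, hwe]) hne
  obtain ⟨T₁, -, hT₁, hcard₁, hsum₁⟩ := ih _ (hn ▸ (card_le_card hS₁).trans_lt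
    (card_erase_lt_of_mem he₀)) w₁ hw₁ rfl
  have hdecomp : w = fun e => w₁ e + if e ∈ S then w e₀ else 0 := funext fun e => by simp [w₁]
  rw [hdecomp]
  exact exists_isTree_add_indicator hG hr (filter_subset _ E) hS (hw e₀)
    (hS₁.trans (erase_subset _ _)) hT₁ hcard₁ hsum₁
end Greedy

section UniformWeight

variable {V : Type*} [DecidableEq V]

noncomputable def uniformWeight (F : Finset (Sym2 V)) (e : Sym2 V) : ℝ :=
  if e ∈ F then (#F : ℝ)⁻¹ else 0

lemma uniformWeight_nonneg (F : Finset (Sym2 V)) (e : Sym2 V) : 0 ≤ uniformWeight F e := by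
  unfold uniformWeight
  positivity

lemma uniformWeight_eq_of_ne_zero {F : Finset (Sym2 V)} {e : Sym2 V}
    (he : uniformWeight F e ≠ 0) : uniformWeight F e = (#F : ℝ)⁻¹ := by
  unfold uniformWeight at he ⊢
  split_ifs at he ⊢
  · rfl
  · exact absurd rfl he

lemma sum_uniformWeight {E F : Finset (Sym2 V)} (hFE : F ⊆ E) (hF : F.Nonempty) :
    ∑ e ∈ E, uniformWeight F e = 1 := by
  simp only [uniformWeight]
  rw [sum_ite_mem, inter_eq_right.mpr hFE, sum_const, nsmul_eq_mul,
    mul_inv_cancel₀ (by exact_mod_cast hF.card_pos.ne')]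

end UniformWeight

section TreePacking

variable {V : Type*} [Fintype V] (G : SimpleGraph V) [DecidableRel G.Adj]

/-- The paper's `max_{T ∈ 𝒯(G)} ∑_{e ∈ T} w_e`. -/
noncomputable def maxTreeWeight (w : Sym2 V → ℝ) : ℝ :=
  sSup {s : ℝ | ∃ T : {T : SimpleGraph V // T ≤ G ∧ T.IsTree},
    s = ∑ e ∈ G.edgeFinset, w e * (if e ∈ (T : SimpleGraph V).edgeSet then (1 : ℝ) else 0)}

lemma maxTreeWeight_eq_iSup (w : Sym2 V → ℝ) :
    maxTreeWeight G w = ⨆ T : {T : SimpleGraph V // T ≤ G ∧ T.IsTree},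
      ∑ e ∈ G.edgeFinset.filter (· ∈ (T : SimpleGraph V).edgeSet), w e := by
  simp only [maxTreeWeight, sum_filter, mul_ite, mul_one, mul_zero]
  congr 1
  ext s
  exact exists_congr fun _ => eq_comm

variable {G} [DecidableEq V]

lemma le_maxTreeWeight (hG : G.Connected) {r : ℝ}
    (hr : ∀ F ⊆ G.edgeFinset, F.Nonempty → r * #F ≤ edgeRank F) {w : Sym2 V → ℝ}
    (hw : ∀ e, 0 ≤ w e) (hw₁ : ∑ e ∈ G.edgeFinset, w e = 1) : r ≤ maxTreeWeight G w := by
  obtain ⟨T, hTG, hT, -, hle⟩ := exists_isTree_card_support_eq_and_mul_sum_le hG hr w hw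
  rw [hw₁, mul_one] at hle
  rw [maxTreeWeight_eq_iSup]
  exact hle.trans <| le_ciSup (f := fun T : {T : SimpleGraph V // T ≤ G ∧ T.IsTree} =>
    ∑ e ∈ G.edgeFinset.filter (· ∈ (T : SimpleGraph V).edgeSet), w e)
    (Set.finite_range _).bddAbove ⟨T, hTG, hT⟩

lemma maxTreeWeight_uniformWeight_le (hG : G.Connected) (F : Finset (Sym2 V)) :
    maxTreeWeight G (uniformWeight F) ≤ edgeRank F / #F := by
  obtain ⟨T, hTG, hT⟩ := hG.exists_isTree_le
  have : Nonempty {T : SimpleGraph V // T ≤ G ∧ T.IsTree} := ⟨⟨T, hTG, hT⟩⟩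
  rw [maxTreeWeight_eq_iSup]
  refine ciSup_le fun T => ?_
  simp only [uniformWeight]
  rw [sum_ite_mem, sum_const, nsmul_eq_mul, div_eq_mul_inv]
  gcongr
  refine (card_le_card fun e he => ?_).trans (card_filter_mem_edgeSet_le_edgeRank T.2.2.isAcyclic F)
  simp only [mem_inter, mem_filter] at he ⊢
  exact ⟨he.2, he.1.2⟩

end TreePacking

theorem dual_constant_support_optimum_general
    {V : Type*} [Fintype V] [DecidableEq V]
    (G : SimpleGraph V) [DecidableRel G.Adj] (hG : G.Connected)
    (hE : G.edgeFinset.Nonempty) :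
    ∃ w : Sym2 V → ℝ,
      (∀ e, 0 ≤ w e) ∧ (∑ e ∈ G.edgeFinset, w e = 1) ∧
      (∀ w' : Sym2 V → ℝ, (∀ e, 0 ≤ w' e) → (∑ e ∈ G.edgeFinset, w' e = 1) →
        sSup {s : ℝ | ∃ T : {T : SimpleGraph V // T ≤ G ∧ T.IsTree},
            s = ∑ e ∈ G.edgeFinset,
                  w e * (if e ∈ (T : SimpleGraph V).edgeSet then (1 : ℝ) else 0)}
          ≤ sSup {s : ℝ | ∃ T : {T : SimpleGraph V // T ≤ G ∧ T.IsTree},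
            s = ∑ e ∈ G.edgeFinset,
                  w' e * (if e ∈ (T : SimpleGraph V).edgeSet then (1 : ℝ) else 0)}) ∧
      (∃ c : ℝ, ∀ e ∈ G.edgeFinset, w e ≠ 0 → w e = c) ∧
      sSup {s : ℝ | ∃ T : {T : SimpleGraph V // T ≤ G ∧ T.IsTree},
          s = ∑ e ∈ G.edgeFinset,
                w e * (if e ∈ (T : SimpleGraph V).edgeSet then (1 : ℝ) else 0)}
        = sInf {r : ℝ | ∃ F : Finset (Sym2 V), F ⊆ G.edgeFinset ∧ F.Nonempty ∧
            r = (((Finset.univ.filter (fun v : V => ∃ e ∈ F, v ∈ e)).card : ℝ)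
                  - numComponents F) / (F.card : ℝ)} := by
  set ratios := (G.edgeFinset.powerset.filter Finset.Nonempty).image
    fun F => (edgeRank F : ℝ) / #F
  have hratios : ratios.Nonempty :=
    ⟨_, mem_image_of_mem _ (mem_filter.mpr ⟨mem_powerset_self _, hE⟩)⟩
  rw [setOf_ratio_eq, hratios.csInf_eq_min']
  obtain ⟨F, hF, hmin⟩ := mem_image.mp (ratios.min'_mem hratios)
  obtain ⟨hFE, hFne⟩ := mem_filter.mp hF
  have hr : ∀ F' ⊆ G.edgeFinset, F'.Nonempty → ratios.min' hratios * #F' ≤ edgeRank F' :=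
    fun F' hF'E hF'ne => (le_div_iff₀ (by exact_mod_cast hF'ne.card_pos)).mp <|
      ratios.min'_le _ (mem_image_of_mem _ (mem_filter.mpr ⟨mem_powerset.mpr hF'E, hF'ne⟩))
  have hsum := sum_uniformWeight (mem_powerset.mp hFE) hFne
  have hopt : maxTreeWeight G (uniformWeight F) ≤ ratios.min' hratios :=
    hmin ▸ maxTreeWeight_uniformWeight_le hG F
  exact ⟨uniformWeight F, uniformWeight_nonneg F, hsum,
    fun w' hw' hw'₁ => hopt.trans (le_maxTreeWeight hG hr hw' hw'₁),
    ⟨(#F : ℝ)⁻¹, fun _ _ he => uniformWeight_eq_of_ne_zero he⟩,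
    hopt.antisymm (le_maxTreeWeight hG hr (uniformWeight_nonneg F) hsum)⟩

/-- Constant-support dual optimum: there is a minimizer `w*` of
`w ↦ max_{T∈𝒯(G)} Σ_{e∈T} w_e` over probability distributions `w` on `E` whose
nonzero entries are all equal; consequently the minimum equals
`min_{∅ ≠ F ⊆ E} (|V(F)|−c(F))/|F|`. -/
theorem dual_constant_support_optimum
    {V : Type*} [Fintype V] [DecidableEq V]
    (G : SimpleGraph V) [DecidableRel G.Adj] (hG : G.Connected)
    (hE : G.edgeFinset.Nonempty)
    [Fintype {T : SimpleGraph V // T ≤ G ∧ T.IsTree}] :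
    ∃ w : Sym2 V → ℝ,
      (∀ e, 0 ≤ w e) ∧ (∑ e ∈ G.edgeFinset, w e = 1) ∧
      (∀ w' : Sym2 V → ℝ, (∀ e, 0 ≤ w' e) → (∑ e ∈ G.edgeFinset, w' e = 1) →
        sSup {s : ℝ | ∃ T : {T : SimpleGraph V // T ≤ G ∧ T.IsTree},
            s = ∑ e ∈ G.edgeFinset,
                  w e * (if e ∈ (T : SimpleGraph V).edgeSet then (1 : ℝ) else 0)}
          ≤ sSup {s : ℝ | ∃ T : {T : SimpleGraph V // T ≤ G ∧ T.IsTree},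
            s = ∑ e ∈ G.edgeFinset,
                  w' e * (if e ∈ (T : SimpleGraph V).edgeSet then (1 : ℝ) else 0)}) ∧
      (∃ c : ℝ, ∀ e ∈ G.edgeFinset, w e ≠ 0 → w e = c) ∧
      sSup {s : ℝ | ∃ T : {T : SimpleGraph V // T ≤ G ∧ T.IsTree},
          s = ∑ e ∈ G.edgeFinset,
                w e * (if e ∈ (T : SimpleGraph V).edgeSet then (1 : ℝ) else 0)}
        = sInf {r : ℝ | ∃ F : Finset (Sym2 V), F ⊆ G.edgeFinset ∧ F.Nonempty ∧
            r = (((Finset.univ.filter (fun v : V => ∃ e ∈ F, v ∈ e)).card : ℝ)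
                  - numComponents F) / (F.card : ℝ)} :=
  dual_constant_support_optimum_general G hG hE
end

section
/- (Graph-partitioning guarantee) Suppose ρ is a probability distribution on subgraphs H of G such that every edge e satisfies 1−ε ≤ P_{H∼ρ}(e∈H) ≤ 1, for some ε ∈ [0,1). Then for non-negative weights and potentials with Φ(θ) > 0, the estimate Φ̂_ρ(θ) = √(L_ρ(θ)·U_ρ(θ)) satisfies √(1−ε) ≤ Φ(θ)/Φ̂_ρ(θ) ≤ 1/√(1−ε), where L_ρ(θ) = E_{H∼ρ}[Φ(Π^H(θ))] and U_ρ(θ) = E_{H∼ρ}[Φ(Π^H_ρ(θ))] with Π^H(θ)_e = θ_e·1(e∈H) and Π^H_ρ(θ)_e = θ_e·1(e∈H)/ρ_e. -/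
open scoped Classical

/-!
Write `Φ(θ) = log ∑ₓ exp (∑ₑ θₑ ψₑ(x))`. As a log-sum-exp of a linear function of `θ`, `Φ` is
convex, monotone on `θ ≥ 0` when `ψ ≥ 0`, and satisfies `c Φ(θ) ≤ Φ(c θ)` for `c ≤ 1`.
Monotonicity gives `L ≤ Φ(θ)`. On every edge, `θ` is the `ρ`-average of the reweighted
restrictions `Π^H_ρ(θ)`, so Jensen gives `Φ(θ) ≤ U`. Finally `(1 - ε) Π^H_ρ(θ) ≤ Π^H(θ)`, so
`(1 - ε) U ≤ L`. The chain `(1 - ε) U ≤ L ≤ Φ(θ) ≤ U` pins `Φ(θ) / √(L U)` between `√(1 - ε)`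
and `1 / √(1 - ε)`.
-/

open Finset Real

section LogSumExp

variable {α : Type*} [Fintype α]

noncomputable def logSumExp (s : α → ℝ) : ℝ := log (∑ x, exp (s x))

variable [Nonempty α]

lemma sum_exp_pos (s : α → ℝ) : 0 < ∑ x, exp (s x) :=
  sum_pos (fun x _ => exp_pos (s x)) univ_nonempty

lemma logSumExp_mono : Monotone (logSumExp : (α → ℝ) → ℝ) := fun _ _ hst =>
  log_le_log (sum_exp_pos _) (sum_le_sum fun x _ => exp_le_exp.2 (hst x))

lemma sum_exp_sub_logSumExp (s : α → ℝ) : ∑ x, exp (s x - logSumExp s) = 1 := by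
  simp only [exp_sub, ← sum_div, logSumExp, exp_log (sum_exp_pos s)]
  exact div_self (sum_exp_pos s).ne'

lemma logSumExp_le_iff {s : α → ℝ} {K : ℝ} :
    logSumExp s ≤ K ↔ ∑ x, exp (s x - K) ≤ 1 := by
  simp only [exp_sub, ← sum_div, div_le_one (exp_pos K), logSumExp]
  exact log_le_iff_le_exp (sum_exp_pos s)

lemma le_logSumExp_iff {s : α → ℝ} {K : ℝ} :
    K ≤ logSumExp s ↔ 1 ≤ ∑ x, exp (s x - K) := by
  simp only [exp_sub, ← sum_div, one_le_div (exp_pos K), logSumExp]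
  exact le_log_iff_exp_le (sum_exp_pos s)

lemma le_logSumExp (s : α → ℝ) (x : α) : s x ≤ logSumExp s :=
  le_logSumExp_iff.2 <| by
    simpa using single_le_sum (f := fun y => exp (s y - s x)) (fun y _ => (exp_pos _).le)
      (mem_univ x)

lemma convexOn_logSumExp : ConvexOn ℝ Set.univ (logSumExp : (α → ℝ) → ℝ) := by
  refine ⟨convex_univ, fun s _ t _ a b ha hb hab => logSumExp_le_iff.2 ?_⟩
  calc ∑ x, exp ((a • s + b • t) x - (a • logSumExp s + b • logSumExp t))
      = ∑ x, exp (a • (s x - logSumExp s) + b • (t x - logSumExp t)) := by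
        congr! 2; simp only [Pi.add_apply, Pi.smul_apply, smul_eq_mul]; ring
    _ ≤ ∑ x, (a • exp (s x - logSumExp s) + b • exp (t x - logSumExp t)) :=
        sum_le_sum fun x _ => convexOn_exp.2 trivial trivial ha hb hab
    _ = 1 := by
        simp only [smul_eq_mul, sum_add_distrib, ← mul_sum, sum_exp_sub_logSumExp, hab, mul_one]

lemma mul_logSumExp_le_logSumExp_smul {c : ℝ} (hc : c ≤ 1) (s : α → ℝ) :
    c * logSumExp s ≤ logSumExp (c • s) := by
  refine le_logSumExp_iff.2 ((sum_exp_sub_logSumExp s).ge.trans (sum_le_sum fun x _ => ?_))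
  have hx := le_logSumExp s x
  simp only [Pi.smul_apply, smul_eq_mul, exp_le_exp]
  nlinarith

end LogSumExp

section LogPartitionFn

variable {V X : Type*} [Fintype V] [DecidableEq V] [Fintype X]
  (G : SimpleGraph V) [DecidableRel G.Adj] (ψ : Sym2 V → (V → X) → ℝ)

noncomputable def energy : (Sym2 V → ℝ) →ₗ[ℝ] (V → X) → ℝ where
  toFun θ x := ∑ e ∈ G.edgeFinset, θ e * ψ e x
  map_add' θ θ' := by ext x; simp only [Pi.add_apply, add_mul, sum_add_distrib]
  map_smul' c θ := by
    ext x; simp only [Pi.smul_apply, smul_eq_mul, mul_assoc, ← mul_sum, RingHom.id_apply]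

lemma logPartitionFn_eq_logSumExp_energy (θ : Sym2 V → ℝ) :
    logPartitionFn G ψ θ = logSumExp (energy G ψ θ) := rfl

variable [Nonempty X]

lemma convexOn_logPartitionFn : ConvexOn ℝ Set.univ (logPartitionFn G ψ) :=
  convexOn_logSumExp.comp_linearMap (energy G ψ)

lemma mul_logPartitionFn_le_logPartitionFn_smul {c : ℝ} (hc : c ≤ 1) (θ : Sym2 V → ℝ) :
    c * logPartitionFn G ψ θ ≤ logPartitionFn G ψ (c • θ) := by
  simpa only [logPartitionFn_eq_logSumExp_energy, map_smul] using
    mul_logSumExp_le_logSumExp_smul hc (energy G ψ θ)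

variable {ψ}

lemma logPartitionFn_le_logPartitionFn (hψ : ∀ e x, 0 ≤ ψ e x) {θ θ' : Sym2 V → ℝ}
    (h : ∀ e ∈ G.edgeFinset, θ e ≤ θ' e) :
    logPartitionFn G ψ θ ≤ logPartitionFn G ψ θ' :=
  logSumExp_mono fun x => sum_le_sum fun e he => mul_le_mul_of_nonneg_right (h e he) (hψ e x)

end LogPartitionFn

section Subgraphs

variable {V X ι : Type*} [Fintype V] [DecidableEq V] [Fintype X] [Nonempty X] [Fintype ι]
  {G : SimpleGraph V} [DecidableRel G.Adj] {ψ : Sym2 V → (V → X) → ℝ}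

def edgeProb {E : Type*} [DecidableEq E] (ρ : ι → ℝ) (Hs : ι → Finset E) (e : E) : ℝ :=
  ∑ i, ρ i * if e ∈ Hs i then 1 else 0

lemma sum_mul_logPartitionFn_restrict_le (hψ : ∀ e x, 0 ≤ ψ e x) {θ : Sym2 V → ℝ}
    (hθ : ∀ e, 0 ≤ θ e) (Hs : ι → Finset (Sym2 V)) {ρ : ι → ℝ} (hρ0 : ∀ i, 0 ≤ ρ i)
    (hρ1 : ∑ i, ρ i = 1) :
    ∑ i, ρ i * logPartitionFn G ψ (fun e => if e ∈ Hs i then θ e else 0) ≤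
      logPartitionFn G ψ θ :=
  calc _ ≤ ∑ i, ρ i * logPartitionFn G ψ θ :=
        sum_le_sum fun i _ => mul_le_mul_of_nonneg_left
          (logPartitionFn_le_logPartitionFn G hψ fun e _ => by split_ifs <;> simp [hθ e]) (hρ0 i)
    _ = logPartitionFn G ψ θ := by rw [← sum_mul, hρ1, one_mul]

lemma logPartitionFn_le_sum_mul_reweight (hψ : ∀ e x, 0 ≤ ψ e x) (θ : Sym2 V → ℝ)
    (Hs : ι → Finset (Sym2 V)) {ρ : ι → ℝ} (hρ0 : ∀ i, 0 ≤ ρ i) (hρ1 : ∑ i, ρ i = 1)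
    (hpos : ∀ e ∈ G.edgeFinset, 0 < edgeProb ρ Hs e) :
    logPartitionFn G ψ θ ≤ ∑ i, ρ i * logPartitionFn G ψ
      (fun e => if e ∈ Hs i then θ e / edgeProb ρ Hs e else 0) := by
  set reweight : ι → Sym2 V → ℝ := fun i e => if e ∈ Hs i then θ e / edgeProb ρ Hs e else 0
  have hmean : ∀ e ∈ G.edgeFinset, θ e = (∑ i, ρ i • reweight i) e := by
    intro e he
    have hterm : ∀ i, ρ i * reweight i e =
        θ e / edgeProb ρ Hs e * (ρ i * if e ∈ Hs i then 1 else 0) := by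
      intro i; simp only [reweight]; split_ifs <;> ring
    simp only [Finset.sum_apply, Pi.smul_apply, smul_eq_mul, hterm, ← mul_sum]
    exact (div_mul_cancel₀ _ (hpos e he).ne').symm
  calc logPartitionFn G ψ θ ≤ logPartitionFn G ψ (∑ i, ρ i • reweight i) :=
        logPartitionFn_le_logPartitionFn G hψ fun e he => (hmean e he).le
    _ ≤ ∑ i, ρ i • logPartitionFn G ψ (reweight i) :=
        (convexOn_logPartitionFn G ψ).map_sum_le (fun i _ => hρ0 i) hρ1 fun _ _ => trivial

lemma mul_logPartitionFn_reweight_le (hψ : ∀ e x, 0 ≤ ψ e x) {θ : Sym2 V → ℝ}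
    (hθ : ∀ e, 0 ≤ θ e) (H : Finset (Sym2 V)) {r : Sym2 V → ℝ} {c : ℝ} (hc0 : 0 ≤ c)
    (hc1 : c ≤ 1) (hcr : ∀ e ∈ G.edgeFinset, c ≤ r e) :
    c * logPartitionFn G ψ (fun e => if e ∈ H then θ e / r e else 0) ≤
      logPartitionFn G ψ (fun e => if e ∈ H then θ e else 0) := by
  refine (mul_logPartitionFn_le_logPartitionFn_smul G ψ hc1 _).trans <|
    logPartitionFn_le_logPartitionFn G hψ fun e he => ?_
  simp only [Pi.smul_apply, smul_eq_mul]
  split_ifs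
  · calc c * (θ e / r e) = θ e * (c / r e) := by ring
      _ ≤ θ e * 1 := mul_le_mul_of_nonneg_left
          (div_le_one_of_le₀ (hcr e he) (hc0.trans (hcr e he))) (hθ e)
      _ = θ e := mul_one _
  · simp

lemma mul_sum_mul_logPartitionFn_reweight_le (hψ : ∀ e x, 0 ≤ ψ e x) {θ : Sym2 V → ℝ}
    (hθ : ∀ e, 0 ≤ θ e) (Hs : ι → Finset (Sym2 V)) {ρ : ι → ℝ} (hρ0 : ∀ i, 0 ≤ ρ i)
    (r : Sym2 V → ℝ) {c : ℝ} (hc0 : 0 ≤ c) (hc1 : c ≤ 1)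
    (hcr : ∀ e ∈ G.edgeFinset, c ≤ r e) :
    c * ∑ i, ρ i * logPartitionFn G ψ (fun e => if e ∈ Hs i then θ e / r e else 0) ≤
      ∑ i, ρ i * logPartitionFn G ψ (fun e => if e ∈ Hs i then θ e else 0) := by
  rw [mul_sum]
  refine sum_le_sum fun i _ => ?_
  rw [mul_left_comm]
  exact mul_le_mul_of_nonneg_left
    (mul_logPartitionFn_reweight_le hψ hθ (Hs i) hc0 hc1 hcr) (hρ0 i)

end Subgraphs

lemma sqrt_le_div_sqrt_mul {c P L U : ℝ} (hc : 0 < c) (hP : 0 < P) (hLP : L ≤ P)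
    (hPU : P ≤ U) (hUL : c * U ≤ L) : √c ≤ P / √(L * U) := by
  have hU : 0 < U := hP.trans_le hPU
  have hL : 0 < L := (mul_pos hc hU).trans_le hUL
  rw [le_div_iff₀ (sqrt_pos.2 (mul_pos hL hU)), ← sqrt_mul hc.le, ← sqrt_mul_self hP.le]
  exact sqrt_le_sqrt (by nlinarith)

lemma div_sqrt_mul_le_one_div_sqrt {c P L U : ℝ} (hc : 0 < c) (hP : 0 < P)
    (hPU : P ≤ U) (hUL : c * U ≤ L) : P / √(L * U) ≤ 1 / √c := by
  have hU : 0 < U := hP.trans_le hPU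
  have hL : 0 < L := (mul_pos hc hU).trans_le hUL
  rw [div_le_div_iff₀ (sqrt_pos.2 (mul_pos hL hU)) (sqrt_pos.2 hc), one_mul,
    ← sqrt_mul_self hP.le, ← sqrt_mul (mul_self_nonneg P)]
  exact sqrt_le_sqrt (by nlinarith [mul_le_mul_of_nonneg_left hPU (mul_nonneg hc.le hP.le),
    mul_le_mul_of_nonneg_left hUL hP.le, mul_le_mul_of_nonneg_right hPU hL.le])

theorem graph_partitioning_guarantee_general
    {V X : Type*} [Fintype V] [DecidableEq V] [Fintype X] [Nonempty X]
    (G : SimpleGraph V) [DecidableRel G.Adj]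
    (ψ : Sym2 V → (V → X) → ℝ) (hψ : ∀ e x, 0 ≤ ψ e x)
    (θ : Sym2 V → ℝ) (hθ : ∀ e, 0 ≤ θ e)
    (hΦ : 0 < logPartitionFn G ψ θ)
    {ι : Type*} [Fintype ι] (Hs : ι → Finset (Sym2 V))
    (ρ : ι → ℝ) (hρ0 : ∀ i, 0 ≤ ρ i) (hρ1 : ∑ i, ρ i = 1)
    (ε : ℝ) (hε0 : 0 ≤ ε) (hε1 : ε < 1)
    (hedge : ∀ e ∈ G.edgeFinset,
      1 - ε ≤ ∑ i, ρ i * (if e ∈ Hs i then (1 : ℝ) else 0) ∧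
      ∑ i, ρ i * (if e ∈ Hs i then (1 : ℝ) else 0) ≤ 1)
    (L U phiHat : ℝ)
    (hL : L = ∑ i, ρ i * logPartitionFn G ψ (fun e =>
        if e ∈ Hs i then θ e else 0))
    (hU : U = ∑ i, ρ i * logPartitionFn G ψ (fun e =>
        if e ∈ Hs i then
          θ e / (∑ j, ρ j * (if e ∈ Hs j then (1 : ℝ) else 0))
        else 0))
    (hhat : phiHat = Real.sqrt (L * U)) :
    Real.sqrt (1 - ε) ≤ logPartitionFn G ψ θ / phiHat ∧
      logPartitionFn G ψ θ / phiHat ≤ 1 / Real.sqrt (1 - ε) := by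
  subst hL hU hhat
  have hc : 0 < 1 - ε := sub_pos.2 hε1
  have hLP := sum_mul_logPartitionFn_restrict_le (G := G) hψ hθ Hs hρ0 hρ1
  have hPU := logPartitionFn_le_sum_mul_reweight hψ θ Hs hρ0 hρ1 fun e he =>
    hc.trans_le (hedge e he).1
  have hUL := mul_sum_mul_logPartitionFn_reweight_le hψ hθ Hs hρ0 (edgeProb ρ Hs) hc.le
    (by linarith) fun e he => (hedge e he).1
  exact ⟨sqrt_le_div_sqrt_mul hc hΦ hLP hPU hUL, div_sqrt_mul_le_one_div_sqrt hc hΦ hPU hUL⟩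

/-- Graph-partitioning guarantee: if `ρ` is a probability distribution on subgraphs
(edge subsets) `H ⊆ E` of `G` such that every edge satisfies
`1−ε ≤ ρ_e = P_{H∼ρ}(e∈H) ≤ 1` with `0 ≤ ε < 1`, then for non-negative weights and
potentials with `Φ(θ) > 0`, the estimate `Φ̂_ρ(θ) = √(L_ρ(θ)·U_ρ(θ))` satisfies
`√(1−ε) ≤ Φ(θ)/Φ̂_ρ(θ) ≤ 1/√(1−ε)`. -/
theorem graph_partitioning_guarantee
    {V X : Type*} [Fintype V] [DecidableEq V] [Fintype X] [Nonempty X]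
    (G : SimpleGraph V) [DecidableRel G.Adj]
    (ψ : Sym2 V → (V → X) → ℝ) (hψ : ∀ e x, 0 ≤ ψ e x)
    (hpair : ∀ e ∈ G.edgeSet, ∀ x y : V → X, (∀ v ∈ e, x v = y v) → ψ e x = ψ e y)
    (θ : Sym2 V → ℝ) (hθ : ∀ e, 0 ≤ θ e)
    (hΦ : 0 < logPartitionFn G ψ θ)
    {ι : Type*} [Fintype ι] (Hs : ι → Finset (Sym2 V))
    (hsub : ∀ i, Hs i ⊆ G.edgeFinset)
    (ρ : ι → ℝ) (hρ0 : ∀ i, 0 ≤ ρ i) (hρ1 : ∑ i, ρ i = 1)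
    (ε : ℝ) (hε0 : 0 ≤ ε) (hε1 : ε < 1)
    (hedge : ∀ e ∈ G.edgeFinset,
      1 - ε ≤ ∑ i, ρ i * (if e ∈ Hs i then (1 : ℝ) else 0) ∧
      ∑ i, ρ i * (if e ∈ Hs i then (1 : ℝ) else 0) ≤ 1)
    (L U phiHat : ℝ)
    (hL : L = ∑ i, ρ i * logPartitionFn G ψ (fun e =>
        if e ∈ Hs i then θ e else 0))
    (hU : U = ∑ i, ρ i * logPartitionFn G ψ (fun e =>
        if e ∈ Hs i then
          θ e / (∑ j, ρ j * (if e ∈ Hs j then (1 : ℝ) else 0))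
        else 0))
    (hhat : phiHat = Real.sqrt (L * U)) :
    Real.sqrt (1 - ε) ≤ logPartitionFn G ψ θ / phiHat ∧
      logPartitionFn G ψ θ / phiHat ≤ 1 / Real.sqrt (1 - ε) :=
  graph_partitioning_guarantee_general G ψ hψ θ hθ hΦ Hs ρ hρ0 hρ1 ε hε0 hε1 hedge L U phiHat hL hU
    hhat
end
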